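/- arXiv:math/0205301 — 13 statements merged into one kernel-verified Lean document; each statement's English description precedes it below -/
import Mathlib

section
/- For every natural number n, the number of partitions of a set with n+1 elements equals the sum over k from 0 to n of binomial(n,k) times the number of partitions of a set with k elements. Equivalently, the Bell numbers B_n (with B_n = the number of equivalence relations on Fin n) satisfy B_{n+1} = \sum_{k=0}^{n} \binom{n}{k} B_k, i.e. the Bell number sequence is shifted one place left by the binomial transform. -/
/-!
An equivalence relation on `Option α` is the same as a subset `s` of `α` (the elements
equivalent to `none`) together with an arbitrary equivalence relation on the complement of `s`.
Counting by `k = #s` gives `B (n + 1) = ∑ k, (n choose k) * B (n - k)`, which is the recursion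
defining `Nat.bell`; reflecting the sum gives the binomial-transform form.
-/

instance instFiniteSetoidFin (n : ℕ) : Finite (Setoid (Fin n)) :=
  Finite.of_injective (fun s => s.r) fun a b h => by cases a; cases b; congr

noncomputable instance instFintypeSetoidFin (n : ℕ) : Fintype (Setoid (Fin n)) :=
  Fintype.ofFinite _

open Finset

def Equiv.setoidCongr {α β : Type*} (e : α ≃ β) : Setoid α ≃ Setoid β where
  toFun := Setoid.comap e.symm
  invFun := Setoid.comap e
  left_inv r := by rw [← Setoid.comap_comp, e.symm_comp_self, Setoid.comap_id]
  right_inv r := by rw [← Setoid.comap_comp, e.self_comp_symm, Setoid.comap_id]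

namespace Setoid

variable {α : Type*}

instance instFinite [Finite α] : Finite (Setoid α) :=
  Finite.of_injective (fun r : Setoid α => ⇑r) fun _ _ => eq_iff_rel_eq.2

section Option

open Classical in
/-- `none` and `some '' s` form one class; outside it the classes are those of `q`. -/
noncomputable def ofNoneClass (s : Finset α) (q : Setoid {x // x ∉ s}) : Setoid (Option α) :=
  ker fun o : Option α =>
    o.elim none fun x => if h : x ∈ s then none else some (Quotient.mk q ⟨x, h⟩)

theorem comap_some_ofNoneClass (s : Finset α) (q : Setoid {x // x ∉ s}) :
    comap (fun x => some x.1) (ofNoneClass s q) = q := by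
  ext ⟨x, hx⟩ ⟨y, hy⟩
  rw [comap_rel, ofNoneClass, ker_def]
  simp [hx, hy, Quotient.eq]

variable [Fintype α]

open Classical in
noncomputable def noneClass (r : Setoid (Option α)) : Finset α :=
  univ.filter fun x => r (some x) none

theorem mem_noneClass {r : Setoid (Option α)} {x : α} :
    x ∈ noneClass r ↔ r (some x) none := by
  simp [noneClass]

theorem noneClass_ofNoneClass (s : Finset α) (q : Setoid {x // x ∉ s}) :
    noneClass (ofNoneClass s q) = s := by
  ext x
  simp [mem_noneClass, ofNoneClass, ker_def]

theorem ofNoneClass_noneClass (r : Setoid (Option α)) :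
    ofNoneClass (noneClass r) (comap (fun x => some x.1) r) = r := by
  ext (_ | x) (_ | y) <;> rw [ofNoneClass, ker_def] <;> simp only [Option.elim]
  · exact iff_of_true trivial (r.refl' none)
  · split_ifs with hy
    · exact iff_of_true rfl (r.symm' (mem_noneClass.1 hy))
    · exact iff_of_false (by simp) fun h => hy (mem_noneClass.2 (r.symm' h))
  · split_ifs with hx
    · exact iff_of_true rfl (mem_noneClass.1 hx)
    · exact iff_of_false (by simp) fun h => hx (mem_noneClass.2 h)
  · split_ifs with hx hy hy
    · exact iff_of_true rfl (r.trans' (mem_noneClass.1 hx) (r.symm' (mem_noneClass.1 hy)))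
    · exact iff_of_false (by simp) fun h =>
        hy (mem_noneClass.2 (r.trans' (r.symm' h) (mem_noneClass.1 hx)))
    · exact iff_of_false (by simp) fun h =>
        hx (mem_noneClass.2 (r.trans' h (mem_noneClass.1 hy)))
    · simp [Quotient.eq, comap_rel]

noncomputable def noneClassFiberEquiv (s : Finset α) :
    {r : Setoid (Option α) // noneClass r = s} ≃ Setoid {x // x ∉ s} where
  toFun r := comap (fun x => some x.1) r.1
  invFun q := ⟨ofNoneClass s q, noneClass_ofNoneClass s q⟩
  left_inv := fun ⟨r, hr⟩ => Subtype.ext (by subst hr; exact ofNoneClass_noneClass r)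
  right_inv := comap_some_ofNoneClass s

theorem card_option :
    Nat.card (Setoid (Option α)) = ∑ s : Finset α, Nat.card (Setoid {x // x ∉ s}) := by
  rw [← Nat.card_congr (Equiv.sigmaFiberEquiv noneClass), Nat.card_sigma]
  exact sum_congr rfl fun s _ => Nat.card_congr (noneClassFiberEquiv s)

end Option

end Setoid

theorem Nat.bell_succ_eq_sum_choose_mul_bell (n : ℕ) :
    (n + 1).bell = ∑ k ∈ range (n + 1), n.choose k * k.bell := by
  rw [Nat.bell_succ, ← range_succ_eq_Iic, ← sum_range_reflect]
  refine sum_congr rfl fun k hk => ?_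
  have hk : k ≤ n := mem_range_succ_iff.mp hk
  rw [Nat.add_sub_cancel, Nat.choose_symm hk, Nat.sub_sub_self hk]

theorem Nat.card_setoid (α : Type*) [Finite α] : Nat.card (Setoid α) = (Nat.card α).bell := by
  classical
  induction h : Nat.card α using Nat.strong_induction_on generalizing α with
  | _ n ih =>
  cases n with
  | zero =>
    have : IsEmpty α := Finite.card_eq_zero_iff.mp h
    rw [Nat.bell_zero, Nat.card_eq_one_iff_unique]
    exact ⟨⟨fun _ _ => Setoid.ext fun a => isEmptyElim a⟩, ⟨⊥⟩⟩
  | succ n =>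
    obtain ⟨a⟩ : Nonempty α := (Nat.card_pos_iff.1 (by omega)).1
    have := Fintype.ofFinite α
    let β := {x // x ≠ a}
    have card_β : Fintype.card β = n := by
      rw [Fintype.card_subtype_compl, ← Nat.card_eq_fintype_card, h]
      simp
    have card_compl (s : Finset β) : Nat.card {x // x ∉ s} = n - #s := by simp [card_β]
    calc Nat.card (Setoid α)
        = Nat.card (Setoid (Option β)) := Nat.card_congr (Equiv.optionSubtypeNe a).setoidCongr.symm
      _ = ∑ s : Finset β, Nat.card (Setoid {x // x ∉ s}) := Setoid.card_option
      _ = ∑ s : Finset β, (n - #s).bell := sum_congr rfl fun s _ => by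
          rw [ih _ (by omega) _ (card_compl s)]
      _ = ∑ k ∈ range (n + 1), n.choose k * (n - k).bell := by
          rw [← powerset_univ, sum_powerset_apply_card fun k => (n - k).bell,
            Finset.card_univ, card_β]
          simp
      _ = (n + 1).bell := by rw [Nat.bell_succ, range_succ_eq_Iic]

/-- The Bell numbers `B n = Fintype.card (Setoid (Fin n))` (the number of partitions of an
`n`-element set) satisfy `B (n+1) = ∑_{k=0}^{n} (n choose k) * B k`: the Bell number sequence
is shifted one place left by the binomial transform. -/
theorem bell_shift_left_under_binomial_transform (n : ℕ) :
    Fintype.card (Setoid (Fin (n + 1))) =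
      ∑ k ∈ Finset.range (n + 1), n.choose k * Fintype.card (Setoid (Fin k)) := by
  simp only [← Nat.card_eq_fintype_card, Nat.card_setoid, Nat.card_fin]
  exact Nat.bell_succ_eq_sum_choose_mul_bell n
end

section
/- The exponential generating function of the Bell numbers is exp(e^x - 1): as formal power series over ℚ, \sum_{n\ge 0} (B_n/n!) X^n equals the substitution of the series exp(X) - 1 (which has zero constant term) into the exponential power series, where B_n = Fintype.card (Setoid (Fin n)). -/
open PowerSeries

/-- Substitution of the power series `a` (which should have zero constant term) into the
power series `f`, i.e. `f(a)`.  Since `a` has zero constant term, the coefficient of `X^n`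
in `f(a)` is the finite sum `∑_{k=0}^{n} (coeff k f) * (coeff n (a^k))`. -/
noncomputable def PowerSeries.subst' (a f : PowerSeries ℚ) : PowerSeries ℚ :=
  PowerSeries.mk fun n =>
    ∑ k ∈ Finset.range (n + 1), (PowerSeries.coeff (R := ℚ) k f) * (PowerSeries.coeff (R := ℚ) n (a ^ k))

open Finset Function

/-- Membership in an infimum of finsets. -/
lemma mem_finset_inf {ι α : Type*} [DecidableEq α] [Fintype α] {t : Finset ι}
    {S : ι → Finset α} {x : α} : x ∈ t.inf S ↔ ∀ i ∈ t, x ∈ S i := by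
  classical
  induction t using Finset.cons_induction with
  | empty => simp [Finset.top_eq_univ]
  | cons a s ha ih => simp [Finset.inf_cons, ih]

/-- Number of functions avoiding a given set of values. -/
lemma card_filter_avoid (n k : ℕ) (t : Finset (Fin k)) :
    #(Finset.univ.filter (fun f : Fin n → Fin k => ∀ a, f a ∉ t)) = (k - #t) ^ n := by
  classical
  rw [← Fintype.card_subtype]
  have e : {f : Fin n → Fin k // ∀ a, f a ∉ t} ≃ (Fin n → {x : Fin k // x ∉ t}) :=
    { toFun := fun f a => ⟨f.1 a, f.2 a⟩
      invFun := fun g => ⟨fun a => (g a).1, fun a => (g a).2⟩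
      left_inv := fun f => rfl
      right_inv := fun g => rfl }
  rw [Fintype.card_congr e, Fintype.card_fun]
  congr 1
  · rw [Fintype.card_subtype_compl]
    simp [Fintype.card_coe]
  · simp

/-- Inclusion–exclusion count of surjections from `Fin n` onto `Fin k`. -/
lemma card_surjections (n k : ℕ) :
    (Nat.card {f : Fin n → Fin k // Function.Surjective f} : ℤ) =
      ∑ m ∈ Finset.range (k + 1), (-1 : ℤ) ^ (k - m) * (k.choose m) * (m : ℤ) ^ n := by
  classical
  have key := Finset.inclusion_exclusion_card_inf_compl (Finset.univ : Finset (Fin k))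
    (fun i => Finset.univ.filter (fun f : Fin n → Fin k => ∀ a, f a ≠ i))
  have hL : (Finset.univ.inf fun i : Fin k =>
      (Finset.univ.filter (fun f : Fin n → Fin k => ∀ a, f a ≠ i))ᶜ) =
      Finset.univ.filter (fun f : Fin n → Fin k => Function.Surjective f) := by
    ext f
    simp only [mem_finset_inf, Finset.mem_compl, Finset.mem_filter, Finset.mem_univ, true_and,
      not_forall, not_not]
    exact ⟨fun h i => h i trivial, fun h i _ => h i⟩
  have hT : ∀ t : Finset (Fin k),
      (t.inf fun i => Finset.univ.filter (fun f : Fin n → Fin k => ∀ a, f a ≠ i)) =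
        Finset.univ.filter (fun f : Fin n → Fin k => ∀ a, f a ∉ t) := by
    intro t
    ext f
    simp only [mem_finset_inf, Finset.mem_filter, Finset.mem_univ, true_and]
    constructor
    · intro h a hat
      exact h (f a) hat a rfl
    · intro h i hit a hfa
      exact h a (hfa ▸ hit)
  rw [hL] at key
  have hcard : Nat.card {f : Fin n → Fin k // Function.Surjective f} =
      #(Finset.univ.filter (fun f : Fin n → Fin k => Function.Surjective f)) := by
    rw [Nat.card_eq_fintype_card, Fintype.card_subtype]
  rw [hcard, key]
  have : ∀ t ∈ (Finset.univ : Finset (Fin k)).powerset,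
      (-1 : ℤ) ^ (#t) * (#(t.inf fun i =>
          Finset.univ.filter (fun f : Fin n → Fin k => ∀ a, f a ≠ i)) : ℤ) =
        (-1 : ℤ) ^ (#t) * ((k - #t : ℕ) : ℤ) ^ n := by
    intro t _
    rw [hT t, card_filter_avoid]
    push_cast
    ring
  rw [Finset.sum_congr rfl this, Finset.sum_powerset]
  simp only [Finset.card_univ, Fintype.card_fin]
  rw [← Finset.sum_range_reflect]
  refine Finset.sum_congr rfl fun j hj => ?_
  rw [Finset.mem_range] at hj
  have hjk : j ≤ k := Nat.lt_succ_iff.mp hj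
  have h1 : k + 1 - 1 - j = k - j := by rw [Nat.add_sub_cancel]
  rw [h1]
  have h2 : ∀ t ∈ Finset.powersetCard (k - j) (Finset.univ : Finset (Fin k)),
      (-1 : ℤ) ^ (#t) * ((k - #t : ℕ) : ℤ) ^ n = (-1 : ℤ) ^ (k - j) * (j : ℤ) ^ n := by
    intro t ht
    rw [Finset.mem_powersetCard] at ht
    rw [ht.2, Nat.sub_sub_self hjk]
  rw [Finset.sum_congr rfl h2, Finset.sum_const, Finset.card_powersetCard, Finset.card_univ,
    Fintype.card_fin, Nat.choose_symm hjk, nsmul_eq_mul]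
  ring

/-- Surjections with kernel `s` correspond to bijective labellings of the quotient. -/
noncomputable def kerFiberEquiv (n k : ℕ) (s : Setoid (Fin n)) :
    {f : Fin n → Fin k // Function.Surjective f ∧ Setoid.ker f = s} ≃ (Quotient s ≃ Fin k) where
  toFun p :=
    Equiv.ofBijective (Quotient.lift p.1 (fun a b hab => by
        have hab' : s a b := hab
        rw [← p.2.2] at hab'
        exact Setoid.ker_def.mp hab'))
      ⟨by
        rintro ⟨a⟩ ⟨b⟩ h
        exact Quotient.sound (p.2.2 ▸ (Setoid.ker_def.mpr h)),
       fun y => by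
        obtain ⟨x, hx⟩ := p.2.1 y
        exact ⟨Quotient.mk s x, hx⟩⟩
  invFun e :=
    ⟨fun x => e (Quotient.mk s x),
     fun y => ⟨(e.symm y).out, by show e ⟦(e.symm y).out⟧ = y; rw [Quotient.out_eq, Equiv.apply_symm_apply]⟩,
     Setoid.ext fun a b =>
       ⟨fun h => Quotient.exact (e.injective h), fun h => congrArg e (Quotient.sound h)⟩⟩
  left_inv p := Subtype.ext (funext fun x => rfl)
  right_inv e := Equiv.ext fun q => Quotient.inductionOn q fun x => rfl

/-- Fibers of the kernel map on surjections. -/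
lemma card_ker_fiber (n k : ℕ) (s : Setoid (Fin n)) :
    Nat.card {f : Fin n → Fin k // Function.Surjective f ∧ Setoid.ker f = s} =
      if Nat.card (Quotient s) = k then k.factorial else 0 := by
  classical
  rw [Nat.card_congr (kerFiberEquiv n k s)]
  rcases eq_or_ne (Nat.card (Quotient s)) k with h | h
  · rw [if_pos h]
    letI : Fintype (Quotient s) := Fintype.ofFinite _
    rw [Nat.card_eq_fintype_card] at h
    have e : Quotient s ≃ Fin k := Fintype.equivFinOfCardEq h
    rw [Nat.card_eq_fintype_card, Fintype.card_equiv e, h]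
  · rw [if_neg h]
    have : IsEmpty (Quotient s ≃ Fin k) :=
      ⟨fun e => h (by rw [Nat.card_congr e, Nat.card_eq_fintype_card, Fintype.card_fin])⟩
    simp [Nat.card_of_isEmpty]

/-- Surjections split according to their kernel. -/
lemma card_surj_eq_sum_fibers (n k : ℕ) :
    Nat.card {f : Fin n → Fin k // Function.Surjective f} =
      ∑ s : Setoid (Fin n),
        Nat.card {f : Fin n → Fin k // Function.Surjective f ∧ Setoid.ker f = s} := by
  classical
  rw [Nat.card_congr (Equiv.sigmaFiberEquiv
    (fun p : {f : Fin n → Fin k // Function.Surjective f} => Setoid.ker p.1)).symm]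
  letI : ∀ s : Setoid (Fin n),
      Fintype {p : {f : Fin n → Fin k // Function.Surjective f} // Setoid.ker p.1 = s} :=
    fun s => Fintype.ofFinite _
  rw [Nat.card_eq_fintype_card, Fintype.card_sigma]
  refine Finset.sum_congr rfl fun s _ => ?_
  rw [← Nat.card_eq_fintype_card]
  exact Nat.card_congr (Equiv.subtypeSubtypeEquivSubtypeInter
    (fun f : Fin n → Fin k => Function.Surjective f) (fun f => Setoid.ker f = s))

/-- The Bell number as a sum over surjection counts. -/
lemma bell_eq_sum (n : ℕ) :
    (Fintype.card (Setoid (Fin n)) : ℚ) =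
      ∑ k ∈ Finset.range (n + 1),
        (Nat.card {f : Fin n → Fin k // Function.Surjective f} : ℚ) / k.factorial := by
  classical
  have hle : ∀ s : Setoid (Fin n), Nat.card (Quotient s) ≤ n := by
    intro s
    have := Nat.card_le_card_of_surjective (Quotient.mk s) (fun q => q.exists_rep)
    simpa using this
  have step : ∀ k : ℕ,
      (Nat.card {f : Fin n → Fin k // Function.Surjective f} : ℚ) / k.factorial =
        ∑ s : Setoid (Fin n), (if Nat.card (Quotient s) = k then (1 : ℚ) else 0) := by
    intro k
    rw [card_surj_eq_sum_fibers]
    rw [Nat.cast_sum, Finset.sum_div]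
    refine Finset.sum_congr rfl fun s _ => ?_
    rw [card_ker_fiber]
    split_ifs with h
    · exact div_self (by exact_mod_cast k.factorial_ne_zero)
    · simp
  rw [Finset.sum_congr rfl fun k _ => step k, Finset.sum_comm]
  have inner : ∀ s : Setoid (Fin n),
      (∑ k ∈ Finset.range (n + 1), if Nat.card (Quotient s) = k then (1 : ℚ) else 0) = 1 := by
    intro s
    rw [Finset.sum_ite_eq]
    rw [if_pos (Finset.mem_range.mpr (Nat.lt_succ_of_le (hle s)))]
  rw [Finset.sum_congr rfl fun s _ => inner s, Finset.sum_const, Finset.card_univ]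
  simp

/-- Coefficients of powers of `exp - 1`. -/
lemma coeff_exp_sub_one_pow (n k : ℕ) :
    (PowerSeries.coeff (R := ℚ) n) ((PowerSeries.exp ℚ - 1) ^ k) =
      (∑ m ∈ Finset.range (k + 1), (-1 : ℚ) ^ (k - m) * (k.choose m) * (m : ℚ) ^ n) /
        n.factorial := by
  have h : PowerSeries.exp ℚ - 1 = PowerSeries.exp ℚ + (-1) := by ring
  rw [h, add_pow, map_sum, Finset.sum_div]
  refine Finset.sum_congr rfl fun m hm => ?_
  rw [PowerSeries.exp_pow_eq_rescale_exp]
  have h2 : (PowerSeries.rescale (m : ℚ) (PowerSeries.exp ℚ)) * (-1) ^ (k - m) *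
        ((k.choose m : ℕ) : PowerSeries ℚ) =
      (PowerSeries.rescale (m : ℚ) (PowerSeries.exp ℚ)) *
        PowerSeries.C (R := ℚ) ((-1) ^ (k - m) * (k.choose m)) := by
    rw [map_mul, map_pow, map_neg, map_one, map_natCast, mul_assoc]
  rw [h2, PowerSeries.coeff_mul_C, PowerSeries.coeff_rescale, PowerSeries.coeff_exp]
  simp only [Algebra.algebraMap_self_apply]
  ring

/-- The exponential generating function of the Bell numbers
`B n = Fintype.card (Setoid (Fin n))` is `exp (e^X - 1)`: it equals the substitution of the
zero-constant-term series `exp X - 1` into the exponential series. -/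
theorem bell_egf_eq_exp_exp_sub_one :
    PowerSeries.mk (fun n => (Fintype.card (Setoid (Fin n)) : ℚ) / n.factorial) =
      PowerSeries.subst' (PowerSeries.exp ℚ - 1) (PowerSeries.exp ℚ) := by
  classical
  ext n
  simp only [PowerSeries.subst', PowerSeries.coeff_mk]
  have hS : ∀ k : ℕ, (PowerSeries.coeff (R := ℚ) n) ((PowerSeries.exp ℚ - 1) ^ k) =
      (Nat.card {f : Fin n → Fin k // Function.Surjective f} : ℚ) / n.factorial := by
    intro k
    rw [coeff_exp_sub_one_pow]
    congr 1
    exact_mod_cast (card_surjections n k).symm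
  calc (Fintype.card (Setoid (Fin n)) : ℚ) / n.factorial
      = (∑ k ∈ Finset.range (n + 1),
          (Nat.card {f : Fin n → Fin k // Function.Surjective f} : ℚ) / k.factorial) /
            n.factorial := by rw [← bell_eq_sum]
    _ = ∑ k ∈ Finset.range (n + 1), (PowerSeries.coeff (R := ℚ) k) (PowerSeries.exp ℚ) *
          (PowerSeries.coeff (R := ℚ) n) ((PowerSeries.exp ℚ - 1) ^ k) := by
        rw [Finset.sum_div]
        refine Finset.sum_congr rfl fun k _ => ?_
        rw [hS k, PowerSeries.coeff_exp]
        simp only [Algebra.algebraMap_self_apply]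
        ring
end

section
/- Let G be a group acting n-fold transitively on a finite type α with n ≤ card α. Then the number of orbits of G acting componentwise on n-tuples of elements of α (i.e. on functions Fin n → α) equals the n-th Bell number B_n = Fintype.card (Setoid (Fin n)). -/
/-- Extension of an injective-on-a-finset map to a globally injective map. -/
lemma exists_inj_extend {α : Type*} [Fintype α] [DecidableEq α] {n : ℕ}
    (hn : n ≤ Fintype.card α) (f : Fin n → α) (s : Finset (Fin n))
    (hs : Set.InjOn f s) :
    ∃ F : Fin n → α, Function.Injective F ∧ ∀ i ∈ s, F i = f i := by
  classical
  have h1 : (s.image f).card = s.card := Finset.card_image_of_injOn hs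
  have h2 : Fintype.card (↥(sᶜ : Finset (Fin n))) ≤
      Fintype.card (↥((s.image f)ᶜ : Finset α)) := by
    simp only [Fintype.card_coe, Finset.card_compl, h1, Fintype.card_fin]
    have hsle : s.card ≤ n := by
      simpa using Finset.card_le_card (Finset.subset_univ s)
    omega
  obtain ⟨w⟩ := Function.Embedding.nonempty_of_card_le h2
  refine ⟨fun i => if h : i ∈ s then f i else (w ⟨i, by simpa using h⟩ : α),
    ?_, fun i hi => by simp [hi]⟩
  intro a b hab
  dsimp only at hab
  by_cases ha : a ∈ s <;> by_cases hb : b ∈ s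
  · rw [dif_pos ha, dif_pos hb] at hab; exact hs ha hb hab
  · rw [dif_pos ha, dif_neg hb] at hab
    exact absurd (hab ▸ Finset.mem_image_of_mem f ha)
      (Finset.mem_compl.mp (w ⟨b, by simpa using hb⟩).2)
  · rw [dif_neg ha, dif_pos hb] at hab
    exact absurd (hab ▸ Finset.mem_image_of_mem f hb)
      (Finset.mem_compl.mp (w ⟨a, by simpa using ha⟩).2)
  · rw [dif_neg ha, dif_neg hb] at hab
    have := w.injective (Subtype.ext hab)
    simpa using congrArg Subtype.val this

/-- If a group `G` acts `n`-fold transitively on a finite type `α` with `n ≤ card α`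
(i.e. `G` acts transitively on injective `n`-tuples), then the number of orbits of `G`
acting componentwise on `n`-tuples `Fin n → α` equals the `n`-th Bell number
`Fintype.card (Setoid (Fin n))`. -/
theorem card_orbits_tuples_of_multiply_transitive
    {G α : Type*} [Group G] [Fintype α] [MulAction G α] (n : ℕ)
    (hn : n ≤ Fintype.card α)
    (htrans : ∀ f g : Fin n ↪ α, ∃ σ : G, ∀ i : Fin n, σ • f i = g i) :
    Nat.card (Quotient (MulAction.orbitRel G (Fin n → α))) =
      Fintype.card (Setoid (Fin n)) := by
  classical
  -- the kernel map is orbit-invariant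
  have hker : ∀ (σ : G) (f : Fin n → α), Setoid.ker (σ • f) = Setoid.ker f := by
    intro σ f
    ext i j
    show (σ • f) i = (σ • f) j ↔ f i = f j
    simp only [Pi.smul_apply]
    exact (MulAction.injective σ).eq_iff
  set Φ : Quotient (MulAction.orbitRel G (Fin n → α)) → Setoid (Fin n) :=
    Quotient.lift (fun f => Setoid.ker f) (by
      intro f g hfg
      obtain ⟨σ, hσ⟩ := hfg
      rw [← hσ]
      exact hker σ g) with hΦ
  have hbij : Function.Bijective Φ := by
    constructor
    · -- injectivity: same kernel implies same orbit
      intro x y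
      induction x using Quotient.inductionOn with
      | h f =>
      induction y using Quotient.inductionOn with
      | h g =>
      intro h
      have h : Setoid.ker f = Setoid.ker g := h
      apply Quotient.sound
      -- construct σ with σ • g = f
      set r : Fin n → Fin n := fun i => (Quotient.mk (Setoid.ker f) i).out with hr
      have hfr : ∀ i, f (r i) = f i := fun i => Quotient.mk_out (s := Setoid.ker f) i
      have hgr : ∀ i, g (r i) = g i := by
        intro i
        have : (Setoid.ker f).r (r i) i := Quotient.mk_out (s := Setoid.ker f) i
        rw [h] at this
        exact this
      have hrinj : ∀ i j, f (r i) = f (r j) → r i = r j := by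
        intro i j hij
        have e1 : (Quotient.mk (Setoid.ker f) (r i)) = Quotient.mk (Setoid.ker f) i :=
          Quotient.sound (Quotient.mk_out (s := Setoid.ker f) i)
        have e2 : (Quotient.mk (Setoid.ker f) (r j)) = Quotient.mk (Setoid.ker f) j :=
          Quotient.sound (Quotient.mk_out (s := Setoid.ker f) j)
        have e3 : (Quotient.mk (Setoid.ker f) (r i)) = Quotient.mk (Setoid.ker f) (r j) :=
          Quotient.sound hij
        rw [e1, e2] at e3
        show r i = r j
        rw [hr]
        exact congrArg Quotient.out e3
      set S : Finset (Fin n) := Finset.image r Finset.univ with hS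
      have hfinj : Set.InjOn f S := by
        intro a ha b hb hab
        simp only [hS, Finset.coe_image, Set.mem_image, Finset.coe_univ] at ha hb
        obtain ⟨i, -, rfl⟩ := ha
        obtain ⟨j, -, rfl⟩ := hb
        exact hrinj i j hab
      have hginj : Set.InjOn g S := by
        intro a ha b hb hab
        simp only [hS, Finset.coe_image, Set.mem_image, Finset.coe_univ] at ha hb
        obtain ⟨i, -, rfl⟩ := ha
        obtain ⟨j, -, rfl⟩ := hb
        apply hrinj i j
        have : (Setoid.ker g).r (r i) (r j) := hab
        rw [← h] at this
        exact this
      obtain ⟨F, hFinj, hF⟩ := exists_inj_extend hn f S hfinj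
      obtain ⟨Gm, hGinj, hG⟩ := exists_inj_extend hn g S hginj
      obtain ⟨σ, hσ⟩ := htrans ⟨Gm, hGinj⟩ ⟨F, hFinj⟩
      refine ⟨σ, ?_⟩
      funext i
      have hiS : r i ∈ S := by simp [hS]
      calc (σ • g) i = σ • g (r i) := by rw [Pi.smul_apply, hgr]
        _ = σ • Gm (r i) := by rw [hG _ hiS]
        _ = F (r i) := hσ (r i)
        _ = f (r i) := hF _ hiS
        _ = f i := hfr i
    · -- surjectivity: every setoid is a kernel
      intro s
      obtain ⟨e⟩ := Function.Embedding.nonempty_of_card_le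
        (by simpa using hn : Fintype.card (Fin n) ≤ Fintype.card α)
      refine ⟨Quotient.mk _ (fun i => e (Quotient.mk s i).out), ?_⟩
      show Setoid.ker _ = s
      ext i j
      show e (Quotient.mk s i).out = e (Quotient.mk s j).out ↔ s.r i j
      rw [e.injective.eq_iff, Quotient.out_inj, Quotient.eq]
  rw [Nat.card_congr (Equiv.ofBijective Φ hbij), Nat.card_eq_fintype_card]
end

section
/- Let W(n) be the number of total preorders (preferential arrangements, i.e. reflexive, transitive, total binary relations) on Fin n. Then W(0) = 1 and for every n ≥ 1, 2·W(n) = \sum_{k=0}^{n} \binom{n}{k} W(k); that is, the binomial transform of W equals [W_1, 2W_1, 2W_2, 2W_3, ...]. -/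
/-- `W n` is the number of total preorders (preferential arrangements / weak orders),
i.e. reflexive, transitive and total binary relations, on `Fin n`. -/
noncomputable def W (n : ℕ) : ℕ :=
  Nat.card {r : Fin n → Fin n → Prop //
    Reflexive r ∧ Transitive r ∧ ∀ x y : Fin n, r x y ∨ r y x}

open Finset

section TP

variable {α : Type*} {β : Type*}

def IsTP (r : α → α → Prop) : Prop :=
  Reflexive r ∧ Transitive r ∧ ∀ x y, r x y ∨ r y x

def TP (α : Type*) := {r : α → α → Prop // IsTP r}

lemma isTP_comp {r : α → α → Prop} (hr : IsTP r) (e : β ≃ α) :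
    IsTP (fun x y => r (e x) (e y)) :=
  ⟨fun x => hr.1 (e x), fun _ _ _ h h' => hr.2.1 h h', fun x y => hr.2.2 (e x) (e y)⟩

def TP.congr (e : α ≃ β) : TP α ≃ TP β where
  toFun r := ⟨fun x y => r.1 (e.symm x) (e.symm y), isTP_comp r.2 e.symm⟩
  invFun r := ⟨fun x y => r.1 (e x) (e y), isTP_comp r.2 e⟩
  left_inv r := Subtype.ext (by funext x y; simp)
  right_inv r := Subtype.ext (by funext x y; simp)

instance [Finite α] : Finite (TP α) := by
  unfold TP
  infer_instance

lemma W_eq (n : ℕ) : W n = Nat.card (TP (Fin n)) := rfl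

lemma card_TP_congr (e : α ≃ β) : Nat.card (TP α) = Nat.card (TP β) :=
  Nat.card_congr (TP.congr e)

/-- Existence of a maximum on a finset for a total transitive relation. -/
lemma exists_top {r : α → α → Prop} (hr : IsTP r) (s : Finset α) (hs : s.Nonempty) :
    ∃ x ∈ s, ∀ y ∈ s, r y x := by
  classical
  induction s using Finset.cons_induction with
  | empty => simp at hs
  | cons a s ha ih =>
    rcases s.eq_empty_or_nonempty with rfl | hs'
    · exact ⟨a, by simp, by simpa using hr.1 a⟩
    · obtain ⟨x, hx, hmax⟩ := ih hs'
      rcases hr.2.2 a x with h | h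
      · refine ⟨x, by simp [hx], ?_⟩
        intro y hy
        rcases Finset.mem_cons.1 hy with rfl | hy
        · exact h
        · exact hmax y hy
      · refine ⟨a, by simp, ?_⟩
        intro y hy
        rcases Finset.mem_cons.1 hy with rfl | hy
        · exact hr.1 _
        · exact hr.2.1 (hmax y hy) h

variable [DecidableEq α]

/-- Glue a total preorder on the complement of `s` with `s` on top (all of `s` maximal,
all equivalent). -/
def glue (s : Finset α) (r : {x : α // x ∉ s} → {x : α // x ∉ s} → Prop) : α → α → Prop :=
  fun x y => if hy : y ∈ s then True else if hx : x ∈ s then False else r ⟨x, hx⟩ ⟨y, hy⟩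

lemma glue_isTP {s : Finset α} {r : {x : α // x ∉ s} → {x : α // x ∉ s} → Prop}
    (hr : IsTP r) : IsTP (glue s r) := by
  refine ⟨fun x => ?_, fun x y z hxy hyz => ?_, fun x y => ?_⟩
  · by_cases hx : x ∈ s <;> simp [glue, hx, hr.1 _]
  · by_cases hz : z ∈ s
    · simp [glue, hz]
    · by_cases hy : y ∈ s
      · simp [glue, hz, hy] at hyz
      · by_cases hx : x ∈ s
        · simp [glue, hy, hx] at hxy
        · simp only [glue, hz, hy, hx, dif_neg, not_false_iff] at *
          exact hr.2.1 hxy hyz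
  · by_cases hx : x ∈ s
    · simp [glue, hx]
    · by_cases hy : y ∈ s
      · simp [glue, hy]
      · simp only [glue, hx, hy, dif_neg, not_false_iff]
        exact hr.2.2 _ _

noncomputable def decompose : (Σ s : {s : Finset α // s.Nonempty},
    TP {x : α // x ∉ (s : Finset α)}) → TP α :=
  fun p => ⟨glue p.1.1 p.2.1, glue_isTP p.2.2⟩

lemma mem_iff_glue {s : Finset α} (hs : s.Nonempty)
    (r : {x : α // x ∉ s} → {x : α // x ∉ s} → Prop) (x : α) :
    x ∈ s ↔ ∀ y, glue s r y x := by
  constructor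
  · intro hx y; simp [glue, hx]
  · intro h
    by_contra hx
    obtain ⟨y₀, hy₀⟩ := hs
    have := h y₀
    simp [glue, hx, hy₀] at this

lemma decompose_injective : Function.Injective (decompose (α := α)) := by
  rintro ⟨⟨s₁, hs₁⟩, ⟨r₁, hr₁⟩⟩ ⟨⟨s₂, hs₂⟩, ⟨r₂, hr₂⟩⟩ h
  have hg : glue s₁ r₁ = glue s₂ r₂ := congrArg Subtype.val h
  have hss : s₁ = s₂ := by
    ext x
    rw [mem_iff_glue hs₁ r₁ x, mem_iff_glue hs₂ r₂ x, hg]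
  subst hss
  have hrr : r₁ = r₂ := by
    funext a b
    have := congrFun (congrFun hg a.1) b.1
    simpa [glue, a.2, b.2] using this
  subst hrr
  rfl

lemma decompose_surjective [Fintype α] [Nonempty α] :
    Function.Surjective (decompose (α := α)) := by
  classical
  rintro ⟨r, hr⟩
  obtain ⟨x₀, -, hx₀⟩ := exists_top hr Finset.univ ⟨Classical.arbitrary α, Finset.mem_univ _⟩
  set s : Finset α := Finset.univ.filter (fun z => ∀ y, r y z) with hs_def
  have hs : s.Nonempty := ⟨x₀, by simp [hs_def]; exact fun y => hx₀ y (Finset.mem_univ y)⟩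
  have hmem : ∀ z, z ∈ s ↔ ∀ y, r y z := by intro z; simp [hs_def]
  refine ⟨⟨⟨s, hs⟩, ⟨fun a b => r a.1 b.1,
    ⟨fun a => hr.1 a.1, fun _ _ _ h h' => hr.2.1 h h', fun a b => hr.2.2 a.1 b.1⟩⟩⟩, ?_⟩
  apply Subtype.ext
  funext x y
  by_cases hy : y ∈ s
  · simp only [decompose, glue, hy, dite_true]
    exact propext ⟨fun _ => (hmem y).1 hy x, fun _ => trivial⟩
  · by_cases hx : x ∈ s
    · simp only [decompose, glue, hy, hx, dite_true, dite_false]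
      apply propext
      constructor
      · intro h; exact h.elim
      · intro hxy
        exfalso
        apply hy
        rw [hmem]
        intro z
        exact hr.2.1 ((hmem x).1 hx z) hxy
    · simp only [decompose, glue, hy, hx, dite_false]

lemma card_TP_decomp (n : ℕ) (hn : 1 ≤ n) :
    W n = ∑ k ∈ Finset.range n, n.choose k * W k := by
  classical
  haveI : Nonempty (Fin n) := ⟨⟨0, hn⟩⟩
  have hbij : Function.Bijective (decompose (α := Fin n)) :=
    ⟨decompose_injective, decompose_surjective⟩
  have h1 : W n = Nat.card (Σ s : {s : Finset (Fin n) // s.Nonempty},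
      TP {x : Fin n // x ∉ (s : Finset (Fin n))}) := by
    rw [W_eq]
    exact (Nat.card_eq_of_bijective _ hbij).symm
  -- card of each fiber
  have hfib : ∀ s : Finset (Fin n), Nat.card (TP {x : Fin n // x ∉ s}) = W (n - s.card) := by
    intro s
    have hcard : Fintype.card {x : Fin n // x ∉ s} = n - s.card := by
      classical
      have := Fintype.card_subtype_compl (fun x : Fin n => x ∈ s)
      simpa using this
    rw [card_TP_congr (Fintype.equivFinOfCardEq hcard), W_eq]
  -- compute the sigma card
  haveI : ∀ s : {s : Finset (Fin n) // s.Nonempty},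
      Fintype (TP {x : Fin n // x ∉ (s : Finset (Fin n))}) := fun s => Fintype.ofFinite _
  have h2 : Nat.card (Σ s : {s : Finset (Fin n) // s.Nonempty},
      TP {x : Fin n // x ∉ (s : Finset (Fin n))})
      = ∑ s : {s : Finset (Fin n) // s.Nonempty}, W (n - (s : Finset (Fin n)).card) := by
    rw [Nat.card_eq_fintype_card, Fintype.card_sigma]
    congr 1
    funext s
    rw [← hfib s.1, Nat.card_eq_fintype_card]
  have h3 : ∑ s : {s : Finset (Fin n) // s.Nonempty}, W (n - (s : Finset (Fin n)).card)
      = ∑ s ∈ Finset.univ.filter (fun s : Finset (Fin n) => s.Nonempty),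
          W (n - s.card) := by
    exact (Finset.sum_subtype (p := fun s : Finset (Fin n) => s.Nonempty)
      (Finset.univ.filter (fun s : Finset (Fin n) => s.Nonempty))
      (fun s => by simp) (fun s => W (n - s.card))).symm
  have h4 : ∑ s ∈ Finset.univ.filter (fun s : Finset (Fin n) => s.Nonempty), W (n - s.card)
      + W n = ∑ s : Finset (Fin n), W (n - s.card) := by
    have := Finset.sum_filter_add_sum_filter_not (Finset.univ : Finset (Finset (Fin n)))
      (fun s => s.Nonempty) (fun s => W (n - s.card))
    rw [← this]
    congr 1
    have : Finset.univ.filter (fun s : Finset (Fin n) => ¬ s.Nonempty) = {∅} := by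
      ext s; simp [Finset.not_nonempty_iff_eq_empty]
    rw [this]
    simp
  have h5 : ∑ s : Finset (Fin n), W (n - s.card)
      = ∑ j ∈ Finset.range (n + 1), n.choose j * W (n - j) := by
    rw [← Finset.powerset_univ, Finset.sum_powerset]
    simp only [Finset.card_univ, Fintype.card_fin]
    apply Finset.sum_congr rfl
    intro j hj
    rw [Finset.sum_congr rfl (fun t ht => by
      rw [(Finset.mem_powersetCard.1 ht).2]), Finset.sum_const, Finset.card_powersetCard,
      Finset.card_univ, Fintype.card_fin, smul_eq_mul]
  have hW : W n = ∑ s ∈ Finset.univ.filter (fun s : Finset (Fin n) => s.Nonempty),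
      W (n - s.card) := h1.trans (h2.trans h3)
  have h6 : ∑ j ∈ Finset.range (n + 1), n.choose j * W (n - j)
      = (∑ j ∈ Finset.range n, n.choose (j + 1) * W (n - (j + 1))) + n.choose 0 * W (n - 0) :=
    Finset.sum_range_succ' _ n
  have key : W n = ∑ j ∈ Finset.range n, n.choose (j + 1) * W (n - (j + 1)) := by
    have := h4.trans (h5.trans h6)
    simp only [Nat.choose_zero_right, Nat.sub_zero, one_mul] at this
    omega
  calc W n = ∑ j ∈ Finset.range n, n.choose (n - 1 - j) * W (n - 1 - j) := by
        rw [key]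
        apply Finset.sum_congr rfl
        intro j hj
        have hjn : j + 1 ≤ n := Finset.mem_range.1 hj
        rw [show n - 1 - j = n - (j + 1) by omega, Nat.choose_symm hjn]
    _ = ∑ k ∈ Finset.range n, n.choose k * W k :=
        Finset.sum_range_reflect (fun k => n.choose k * W k) n

end TP

/-- The number `W n` of total preorders on `Fin n` satisfies `W 0 = 1` and, for `n ≥ 1`,
`2 * W n = ∑_{k=0}^{n} (n choose k) * W k`: the binomial transform of `W` equals
`[W 1, 2*W 1, 2*W 2, 2*W 3, ...]`. -/
theorem totalPreorders_binomial_transform :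
    W 0 = 1 ∧ ∀ n : ℕ, 1 ≤ n → 2 * W n = ∑ k ∈ Finset.range (n + 1), n.choose k * W k := by
  constructor
  · rw [W_eq]
    rw [Nat.card_eq_one_iff_unique]
    refine ⟨⟨fun a b => Subtype.ext (funext fun x => x.elim0)⟩,
      ⟨⟨fun _ _ => True, ⟨fun _ => trivial, fun _ _ _ _ _ => trivial,
        fun _ _ => Or.inl trivial⟩⟩⟩⟩
  · intro n hn
    rw [Finset.sum_range_succ, Nat.choose_self, one_mul, ← card_TP_decomp n hn]
    ring
end

section
/- Let W(n) be the number of total preorders (reflexive, transitive, total binary relations) on Fin n. Then the exponential generating function of W is 1/(2 - e^x): as formal power series over ℚ, (2 - exp) · \sum_{n\ge 0} (W(n)/n!) X^n = 1, where exp denotes the formal exponential series. -/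
open Finset PowerSeries

def TotalPreorderRel (α : Type*) : Type _ :=
  {r : α → α → Prop // Reflexive r ∧ Transitive r ∧ ∀ x y : α, r x y ∨ r y x}

namespace TotalPreorderRel

variable {α β : Type*}

instance [Finite α] : Finite (TotalPreorderRel α) := by
  unfold TotalPreorderRel; infer_instance

theorem refl (r : TotalPreorderRel α) (x : α) : r.1 x x := r.2.1 x

theorem trans (r : TotalPreorderRel α) {x y z : α} : r.1 x y → r.1 y z → r.1 x z :=
  fun h h' => r.2.2.1 h h'

theorem total (r : TotalPreorderRel α) (x y : α) : r.1 x y ∨ r.1 y x := r.2.2.2 x y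

@[ext]
theorem ext {r s : TotalPreorderRel α} (h : ∀ x y, r.1 x y ↔ s.1 x y) : r = s :=
  Subtype.ext <| funext₂ fun x y => propext (h x y)

def comap (f : β → α) (r : TotalPreorderRel α) : TotalPreorderRel β :=
  ⟨fun x y => r.1 (f x) (f y), fun _ => r.refl _, fun _ _ _ => r.trans, fun _ _ => r.total _ _⟩

@[simp]
theorem comap_apply (f : β → α) (r : TotalPreorderRel α) (x y : β) :
    (r.comap f).1 x y ↔ r.1 (f x) (f y) := Iff.rfl

def congr (e : α ≃ β) : TotalPreorderRel α ≃ TotalPreorderRel β where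
  toFun := comap e.symm
  invFun := comap e
  left_inv r := by ext; simp
  right_inv r := by ext; simp

theorem card_eq_W [Fintype α] : Nat.card (TotalPreorderRel α) = W (Fintype.card α) :=
  Nat.card_congr (congr (Fintype.equivFin α))

section Top

variable [Fintype α]

open Classical in
noncomputable def top (r : TotalPreorderRel α) : Finset α := {x | ∀ y, r.1 y x}

theorem mem_top {r : TotalPreorderRel α} {x : α} : x ∈ r.top ↔ ∀ y, r.1 y x := by
  classical simp [top]

theorem top_nonempty [Nonempty α] (r : TotalPreorderRel α) : r.top.Nonempty := by
  have : IsTrans α r.1 := ⟨fun _ _ _ => r.trans⟩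
  have hdir : Directed r.1 id := fun x y => (r.total x y).elim
    (fun h => ⟨y, h, r.refl y⟩) (fun h => ⟨x, r.refl x, h⟩)
  obtain ⟨m, hm⟩ := hdir.finset_le univ
  exact ⟨m, mem_top.2 fun y => hm y (mem_univ y)⟩

end Top

def glue (S : Finset α) (r : TotalPreorderRel {x // x ∉ S}) : TotalPreorderRel α := by
  refine ⟨fun x y => y ∈ S ∨ ∃ (hx : x ∉ S) (hy : y ∉ S), r.1 ⟨x, hx⟩ ⟨y, hy⟩, ?_, ?_, ?_⟩
  · intro x
    by_cases hx : x ∈ S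
    · exact .inl hx
    · exact .inr ⟨hx, hx, r.refl _⟩
  · rintro x y z hxy (hz | ⟨hy, hz, hyz⟩)
    · exact .inl hz
    · obtain hy' | ⟨hx, _, hxy⟩ := hxy
      · exact absurd hy' hy
      · exact .inr ⟨hx, hz, r.trans hxy hyz⟩
  · intro x y
    by_cases hy : y ∈ S
    · exact .inl (.inl hy)
    by_cases hx : x ∈ S
    · exact .inr (.inl hx)
    exact (r.total ⟨x, hx⟩ ⟨y, hy⟩).imp (fun h => .inr ⟨hx, hy, h⟩) (fun h => .inr ⟨hy, hx, h⟩)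

theorem glue_apply {S : Finset α} {r : TotalPreorderRel {x // x ∉ S}} {x y : α} :
    (glue S r).1 x y ↔ y ∈ S ∨ ∃ (hx : x ∉ S) (hy : y ∉ S), r.1 ⟨x, hx⟩ ⟨y, hy⟩ := Iff.rfl

theorem comap_val_glue (S : Finset α) (r : TotalPreorderRel {x // x ∉ S}) :
    (glue S r).comap Subtype.val = r := by
  ext x y
  simp [glue_apply, x.2, y.2]

variable [Fintype α]

theorem top_glue {S : Finset α} (hS : S.Nonempty) (r : TotalPreorderRel {x // x ∉ S}) :
    (glue S r).top = S := by
  ext x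
  refine ⟨fun hx => ?_, fun hx => mem_top.2 fun _ => .inl hx⟩
  obtain ⟨a, ha⟩ := hS
  obtain hx | ⟨ha', -⟩ := mem_top.1 hx a
  · exact hx
  · exact absurd ha ha'

theorem glue_top_comap_val (r : TotalPreorderRel α) :
    glue r.top (r.comap Subtype.val) = r := by
  ext x y
  refine ⟨?_, fun hxy => ?_⟩
  · rintro (hy | ⟨_, _, hxy⟩)
    · exact mem_top.1 hy x
    · exact hxy
  · by_cases hy : y ∈ r.top
    · exact .inl hy
    -- a predecessor of a top element would itself be on top
    exact .inr ⟨fun hx => hy (mem_top.2 fun z => r.trans (mem_top.1 hx z) hxy), hy, hxy⟩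

noncomputable def fiberTopEquiv {S : Finset α} (hS : S.Nonempty) :
    {r : TotalPreorderRel α // r.top = S} ≃ TotalPreorderRel {x // x ∉ S} where
  toFun r := r.1.comap Subtype.val
  invFun r := ⟨glue S r, top_glue hS r⟩
  left_inv := by
    rintro ⟨r, rfl⟩
    exact Subtype.ext (glue_top_comap_val r)
  right_inv := comap_val_glue S

theorem card_fiber_top {S : Finset α} (hS : S.Nonempty) :
    Nat.card {r : TotalPreorderRel α // r.top = S} = W (Fintype.card α - #S) := by
  classical
  rw [Nat.card_congr (fiberTopEquiv hS), card_eq_W, Fintype.card_subtype_compl,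
    Fintype.card_coe]

theorem two_mul_W_card [Nonempty α] :
    2 * W (Fintype.card α) = ∑ S : Finset α, W (Fintype.card α - #S) := by
  classical
  have hpartition : Nat.card (TotalPreorderRel α) = ∑ S : Finset α, Nat.card {r // top r = S} := by
    rw [← Nat.card_sigma]
    exact Nat.card_congr (Equiv.sigmaFiberEquiv top).symm
  have : IsEmpty {r : TotalPreorderRel α // r.top = ∅} :=
    ⟨fun r => (r.1.top_nonempty).ne_empty r.2⟩
  calc 2 * W (Fintype.card α)
      = W (Fintype.card α) + ∑ S : Finset α, Nat.card {r : TotalPreorderRel α // r.top = S} := by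
        rw [two_mul, ← hpartition, card_eq_W]
    _ = W (Fintype.card α) + ∑ S ∈ univ.erase ∅, W (Fintype.card α - #S) := by
        rw [← add_sum_erase univ _ (mem_univ ∅), Nat.card_of_isEmpty, zero_add]
        exact congrArg _ <| sum_congr rfl fun S hS =>
          card_fiber_top (nonempty_iff_ne_empty.2 (ne_of_mem_erase hS))
    _ = ∑ S : Finset α, W (Fintype.card α - #S) := by
        rw [← add_sum_erase univ _ (mem_univ ∅), card_empty, Nat.sub_zero]

end TotalPreorderRel

theorem W_zero : W 0 = 1 := by
  have : Unique (TotalPreorderRel (Fin 0)) :=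
    { default :=
        ⟨fun _ _ => True, fun _ => trivial, fun _ _ _ _ _ => trivial, fun _ _ => .inl trivial⟩
      uniq := fun r => by ext x; exact x.elim0 }
  exact Nat.card_unique (α := TotalPreorderRel (Fin 0))

theorem two_mul_W {n : ℕ} (hn : n ≠ 0) :
    2 * W n = ∑ k ∈ range (n + 1), n.choose k * W (n - k) := by
  have : Nonempty (Fin n) := ⟨⟨0, Nat.pos_of_ne_zero hn⟩⟩
  have h := TotalPreorderRel.two_mul_W_card (α := Fin n)
  rwa [← powerset_univ, sum_powerset_apply_card (fun k => W (Fintype.card (Fin n) - k)), card_univ,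
    Fintype.card_fin] at h

theorem coeff_exp_mul_mk_div_factorial {K : Type*} [Field K] [Algebra ℚ K] (a : ℕ → K) (n : ℕ) :
    coeff n (exp K * mk fun k => a k / k.factorial) =
      (∑ k ∈ range (n + 1), n.choose k * a (n - k)) / n.factorial := by
  rw [coeff_mul, Nat.sum_antidiagonal_eq_sum_range_succ_mk, sum_div]
  refine sum_congr rfl fun k hk => ?_
  have hkn : k ≤ n := Nat.lt_succ_iff.mp (mem_range.mp hk)
  have := charZero_of_injective_algebraMap (algebraMap ℚ K).injective
  have hchoose : (n.choose k : K) ≠ 0 := by exact_mod_cast (Nat.choose_pos hkn).ne'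
  have hfact : (n.choose k * k.factorial * (n - k).factorial : K) = n.factorial := by
    exact_mod_cast Nat.choose_mul_factorial_mul_factorial hkn
  rw [coeff_exp, coeff_mk, ← hfact]
  simp only [one_div, map_inv₀, map_natCast]
  field_simp

/-- The exponential generating function of the numbers `W n` of total preorders on `Fin n`
is `1 / (2 - e^x)`: as formal power series over `ℚ`, `(2 - exp) * ∑ (W n / n!) Xⁿ = 1`. -/
theorem totalPreorders_egf :
    (2 - PowerSeries.exp ℚ) * PowerSeries.mk (fun n => (W n : ℚ) / n.factorial) = 1 := by
  ext n
  rw [sub_mul, two_mul, map_sub, map_add, coeff_exp_mul_mk_div_factorial, coeff_mk, coeff_one]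
  rcases n with _ | n
  · simp [W_zero]
  · have hsum : (∑ k ∈ range (n + 2), (n + 1).choose k * W (n + 1 - k) : ℚ) =
        W (n + 1) + W (n + 1) := by
      exact_mod_cast ((two_mul _).symm.trans (two_mul_W n.succ_ne_zero)).symm
    rw [hsum, add_div, sub_self, if_neg n.succ_ne_zero]
end

section
/- Define a : ℕ → ℚ by a_0 = 1 and, for n ≥ 1, a_n = -(2/(n+1))·(2^{n+1} - 1)·B_{n+1}, where B_m denotes the m-th Bernoulli number. Then for every n ≥ 1, \sum_{k=0}^n \binom{n}{k} a_k = -a_n. (Thus the sequence [1, -1/2, 0, 1/4, 0, -1/2, 0, 17/8, ...], whose exponential generating function is 2/(1+e^x), is sent by the binomial transform to [a_0, -a_1, -a_2, ...].) -/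
/-!
Let `A = ∑ aₙ xⁿ / n!` and `B(x) = x / (eˣ - 1) = ∑ Bₙ xⁿ / n!`. The formula for `aₙ` says exactly
that `x A(x) = 2 (B(x) - B(2x))`, and since `1/(eˣ - 1) - 2/(e²ˣ - 1) = 1/(eˣ + 1)` this means
`A (eˣ + 1) = 2`. Multiplying an exponential generating function by `eˣ` takes the binomial
transform of its coefficients, so comparing the coefficients of `xⁿ` (`n ≥ 1`) in `A eˣ = 2 - A`
gives the claim.
-/

open PowerSeries Nat

theorem coeff_mk_div_factorial_mul_exp {K : Type*} [Field K] [Algebra ℚ K] (b : ℕ → K) (n : ℕ) :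
    coeff n (mk (fun k => b k / k !) * exp K) =
      (∑ k ∈ Finset.range (n + 1), n.choose k * b k) / n ! := by
  have := charZero_of_injective_algebraMap (algebraMap ℚ K).injective
  rw [coeff_mul, Finset.Nat.sum_antidiagonal_eq_sum_range_succ_mk,
    eq_div_iff (cast_ne_zero.mpr n.factorial_ne_zero), Finset.sum_mul]
  refine Finset.sum_congr rfl fun k hk => ?_
  have hkn : k ≤ n := Nat.lt_succ_iff.mp (Finset.mem_range.mp hk)
  rw [coeff_mk, coeff_exp, map_div₀, map_one, map_natCast, cast_choose K hkn]
  field_simp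

theorem X_mul_mk_eq_bernoulliPowerSeries_sub_rescale (a : ℕ → ℚ) (h0 : a 0 = 1)
    (ha : ∀ n : ℕ, 1 ≤ n →
      a n = -(2 / ((n : ℚ) + 1)) * (2 ^ (n + 1) - 1) * bernoulli (n + 1)) :
    X * mk (fun n => a n / n !) =
      2 * (bernoulliPowerSeries ℚ - rescale 2 (bernoulliPowerSeries ℚ)) := by
  ext n
  rw [← map_ofNat C, coeff_C_mul, map_sub, coeff_rescale]
  simp only [bernoulliPowerSeries, coeff_mk, Algebra.algebraMap_self_apply]
  rcases n with _ | _ | n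
  · rw [coeff_zero_X_mul]
    ring
  · rw [coeff_succ_X_mul, coeff_mk, h0, bernoulli_one]
    norm_num
  · rw [coeff_succ_X_mul, coeff_mk, ha (n + 1) (by omega), factorial_succ (n + 1)]
    push_cast
    field_simp
    ring

theorem mul_exp_add_one_eq_two_of_X_mul_eq {K : Type*} [Field K] [Algebra ℚ K] {A : K⟦X⟧}
    (hA : X * A = 2 * (bernoulliPowerSeries K - rescale 2 (bernoulliPowerSeries K))) :
    A * (exp K + 1) = 2 := by
  set B := bernoulliPowerSeries K
  have hB : B * (exp K - 1) = X := bernoulliPowerSeries_mul_exp_sub_one K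
  have hB2 : rescale 2 B * (exp K ^ 2 - 1) = 2 * X := by
    have := congrArg (rescale (2 : K)) hB
    rwa [map_mul, map_sub, map_one, rescale_X, map_ofNat, ← Nat.cast_ofNat,
      ← exp_pow_eq_rescale_exp] at this
  have hE : exp K - 1 ≠ 0 := fun h => by simpa using congrArg (coeff 1) h
  refine mul_right_cancel₀ (mul_ne_zero X_ne_zero hE) ?_
  linear_combination (exp K ^ 2 - 1) * hA + 2 * (exp K + 1) * hB - 2 * hB2

/-- Let `a 0 = 1` and, for `n ≥ 1`, `a n = -(2/(n+1)) * (2^(n+1) - 1) * B_{n+1}` where `B`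
denotes the Bernoulli numbers (this is the sequence `[1, -1/2, 0, 1/4, 0, -1/2, 0, 17/8, ...]`
with exponential generating function `2/(1+e^x)`).  Then for every `n ≥ 1`,
`∑_{k=0}^{n} (n choose k) * a k = -a n`: the binomial transform sends `a` to
`[a 0, -a 1, -a 2, ...]`. -/
theorem binomial_transform_eigen_N (a : ℕ → ℚ) (h0 : a 0 = 1)
    (ha : ∀ n : ℕ, 1 ≤ n →
      a n = -(2 / ((n : ℚ) + 1)) * (2 ^ (n + 1) - 1) * bernoulli (n + 1)) :
    ∀ n : ℕ, 1 ≤ n → ∑ k ∈ Finset.range (n + 1), (n.choose k : ℚ) * a k = -a n := by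
  intro n hn
  set A : ℚ⟦X⟧ := mk fun k => a k / (k ! : ℚ) with hA
  have hegf : A * (exp ℚ + 1) = 2 :=
    mul_exp_add_one_eq_two_of_X_mul_eq (X_mul_mk_eq_bernoulliPowerSeries_sub_rescale a h0 ha)
  have hAE : A * exp ℚ = 2 - A := by linear_combination hegf
  have hcoeff := congrArg (coeff n) hAE
  rw [hA, coeff_mk_div_factorial_mul_exp, map_sub, coeff_mk, ← map_ofNat C, coeff_C,
    if_neg (by omega), zero_sub, div_eq_iff (by positivity)] at hcoeff
  rw [hcoeff]
  field_simp
end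

section
/- There exists a unique formal power series A over ℚ with constant coefficient 0 satisfying A'(X) = A(e^X - 1) + 1, i.e. derivative A = subst (exp - 1) A + 1; moreover, for every n, n!·(coeff n A) is an integer (these integers are 1, 1, 2, 6, 26, 152, 1144, 10742, ..., the eigen-sequence of R∘STIRLING, which shifts one place left under the Stirling transform). -/
open PowerSeries Finset

/-- Substitution of the power series `a` (which should have zero constant term) into the
power series `f`, i.e. `f(a)`.  Since `a` has zero constant term, the coefficient of `X^n`
in `f(a)` is the finite sum `∑_{k=0}^{n} (coeff k f) * (coeff n (a^k))`. -/
noncomputable def PowerSeries.substQ (a f : PowerSeries ℚ) : PowerSeries ℚ :=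
  PowerSeries.mk fun n =>
    ∑ k ∈ Finset.range (n + 1), (PowerSeries.coeff k f) * (PowerSeries.coeff n (a ^ k))

/-- Stirling numbers of the second kind (as integers). -/
def stirAux : ℕ → ℕ → ℤ
  | 0, 0 => 1
  | 0, _+1 => 0
  | _+1, 0 => 0
  | n+1, k+1 => (k+1) * stirAux n (k+1) + stirAux n k

lemma coeff_subst_def (a f : PowerSeries ℚ) (n : ℕ) :
    PowerSeries.coeff n (PowerSeries.substQ a f) =
      ∑ k ∈ Finset.range (n + 1),
        (PowerSeries.coeff k f) * (PowerSeries.coeff n (a ^ k)) := by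
  simp [PowerSeries.substQ]

lemma derivative_exp_sub_one :
    PowerSeries.derivative ℚ (PowerSeries.exp ℚ - 1) = PowerSeries.exp ℚ := by
  ext n
  rw [PowerSeries.coeff_derivative, map_sub, PowerSeries.coeff_exp, PowerSeries.coeff_exp,
    PowerSeries.coeff_one, if_neg (Nat.succ_ne_zero n)]
  have h2 : ((n).factorial : ℚ) ≠ 0 := Nat.cast_ne_zero.mpr (Nat.factorial_ne_zero _)
  have hn1 : ((n:ℚ)+1) ≠ 0 := by positivity
  simp only [Algebra.algebraMap_self, RingHom.id_apply]
  rw [Nat.factorial_succ]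
  push_cast
  field_simp
  simp

lemma key_coeff (n : ℕ) : ∀ k : ℕ,
    (n.factorial : ℚ) * PowerSeries.coeff n ((PowerSeries.exp ℚ - 1) ^ k)
      = (k.factorial : ℚ) * (stirAux n k : ℚ) := by
  induction n with
  | zero =>
    intro k
    rw [PowerSeries.coeff_zero_eq_constantCoeff, map_pow]
    have h0 : PowerSeries.constantCoeff (PowerSeries.exp ℚ - 1) = 0 := by
      simp [PowerSeries.constantCoeff_exp]
    rw [h0]
    cases k with
    | zero => simp [stirAux]
    | succ k => simp [stirAux, zero_pow]
  | succ n ih =>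
    intro k
    have hD : PowerSeries.coeff n (PowerSeries.derivative ℚ ((PowerSeries.exp ℚ - 1) ^ k))
        = PowerSeries.coeff (n+1) ((PowerSeries.exp ℚ - 1) ^ k) * (n+1) :=
      PowerSeries.coeff_derivative _ n
    cases k with
    | zero =>
      simp [stirAux, PowerSeries.coeff_one]
    | succ k =>
      have hmul : (PowerSeries.exp ℚ - 1) ^ k * PowerSeries.exp ℚ
          = (PowerSeries.exp ℚ - 1) ^ (k+1) + (PowerSeries.exp ℚ - 1) ^ k := by ring
      have hder : PowerSeries.derivative ℚ ((PowerSeries.exp ℚ - 1) ^ (k+1))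
          = (k+1) • ((PowerSeries.exp ℚ - 1) ^ (k+1) + (PowerSeries.exp ℚ - 1) ^ k) := by
        rw [Derivation.leibniz_pow, derivative_exp_sub_one]
        simp only [Nat.add_sub_cancel, smul_eq_mul]
        rw [hmul]
      have hthis := congrArg (PowerSeries.coeff n) hder
      rw [hD, map_nsmul, map_add, nsmul_eq_mul] at hthis
      push_cast at hthis
      have hfac : ((n+1).factorial : ℚ) = ((n:ℚ)+1) * (n.factorial : ℚ) := by
        rw [Nat.factorial_succ]; push_cast; ring
      have hkfac : (((k+1)).factorial : ℚ) = ((k:ℚ)+1) * (k.factorial : ℚ) := by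
        rw [Nat.factorial_succ]; push_cast; ring
      have e6 : ((stirAux (n+1) (k+1) : ℤ) : ℚ)
          = ((k:ℚ)+1) * (stirAux n (k+1) : ℚ) + (stirAux n k : ℚ) := by
        rw [show stirAux (n+1) (k+1) = (k+1) * stirAux n (k+1) + stirAux n k from rfl]
        push_cast; ring
      linear_combination PowerSeries.coeff (n+1) ((PowerSeries.exp ℚ - 1) ^ (k+1)) * hfac
        + (n.factorial : ℚ) * hthis + ((k:ℚ)+1) * ih (k+1) + ((k:ℚ)+1) * ih k
        - ((k+1).factorial : ℚ) * e6 - (stirAux n k : ℚ) * hkfac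

/-- The eigen-sequence `1, 1, 2, 6, 26, 152, ...` (with a 0 prepended): `aSeq n = n! * coeff n A`. -/
def aSeq : ℕ → ℤ
  | 0 => 0
  | n+1 => (∑ k ∈ (Finset.range (n+1)).attach, aSeq k.1 * stirAux n k.1)
      + (if n = 0 then 1 else 0)
  decreasing_by exact Nat.lt_succ_of_le (Nat.lt_succ_iff.mp (Finset.mem_range.mp k.2))

lemma aSeq_succ (n : ℕ) :
    aSeq (n+1) = (∑ k ∈ Finset.range (n+1), aSeq k * stirAux n k)
      + (if n = 0 then 1 else 0) := by
  rw [aSeq, Finset.sum_attach (Finset.range (n+1)) (fun k => aSeq k * stirAux n k)]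

/-- The canonical solution. -/
noncomputable def Asol : PowerSeries ℚ :=
  PowerSeries.mk fun n => (aSeq n : ℚ) / (n.factorial : ℚ)

lemma Asol_coeff (n : ℕ) :
    PowerSeries.coeff n Asol = (aSeq n : ℚ) / (n.factorial : ℚ) := by
  simp [Asol]

lemma Asol_spec :
    PowerSeries.coeff 0 Asol = 0 ∧
    PowerSeries.derivative ℚ Asol =
      PowerSeries.substQ (PowerSeries.exp ℚ - 1) Asol + 1 := by
  constructor
  · simp [Asol_coeff, aSeq]
  · ext n
    rw [PowerSeries.coeff_derivative, map_add, coeff_subst_def, PowerSeries.coeff_one]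
    have hfacn : ((n).factorial : ℚ) ≠ 0 := Nat.cast_ne_zero.mpr (Nat.factorial_ne_zero _)
    apply mul_left_cancel₀ hfacn
    have lhs : ((n).factorial : ℚ) * (PowerSeries.coeff (n+1) Asol * (n+1)) = (aSeq (n+1) : ℚ) := by
      rw [Asol_coeff, Nat.factorial_succ]
      push_cast
      field_simp
    rw [lhs, mul_add, Finset.mul_sum]
    have hterm : ∀ k ∈ Finset.range (n+1),
        (n.factorial : ℚ) * (PowerSeries.coeff k Asol *
          PowerSeries.coeff n ((PowerSeries.exp ℚ - 1) ^ k))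
        = ((aSeq k : ℤ) : ℚ) * ((stirAux n k : ℤ) : ℚ) := by
      intro k _
      rw [Asol_coeff]
      have hk : ((k).factorial : ℚ) ≠ 0 := Nat.cast_ne_zero.mpr (Nat.factorial_ne_zero _)
      have hkey := key_coeff n k
      field_simp
      linear_combination (aSeq k : ℚ) * hkey
    rw [Finset.sum_congr rfl hterm, aSeq_succ]
    rcases Nat.eq_zero_or_pos n with h | h
    · subst h; push_cast; simp
    · rw [if_neg h.ne', if_neg h.ne']
      push_cast
      ring

lemma uniq_sol (A B : PowerSeries ℚ)
    (hA0 : PowerSeries.coeff 0 A = 0)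
    (hA : PowerSeries.derivative ℚ A = PowerSeries.substQ (PowerSeries.exp ℚ - 1) A + 1)
    (hB0 : PowerSeries.coeff 0 B = 0)
    (hB : PowerSeries.derivative ℚ B = PowerSeries.substQ (PowerSeries.exp ℚ - 1) B + 1) :
    A = B := by
  ext n
  induction n using Nat.strong_induction_on with
  | _ n ih =>
    cases n with
    | zero => rw [hA0, hB0]
    | succ n =>
      have hdA := congrArg (PowerSeries.coeff n) hA
      have hdB := congrArg (PowerSeries.coeff n) hB
      rw [PowerSeries.coeff_derivative, map_add, coeff_subst_def] at hdA hdB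
      have hsum : ∑ k ∈ Finset.range (n+1), PowerSeries.coeff k A *
            PowerSeries.coeff n ((PowerSeries.exp ℚ - 1) ^ k)
          = ∑ k ∈ Finset.range (n+1), PowerSeries.coeff k B *
            PowerSeries.coeff n ((PowerSeries.exp ℚ - 1) ^ k) := by
        apply Finset.sum_congr rfl
        intro k hk
        rw [ih k (Finset.mem_range.mp hk)]
      rw [hsum, ← hdB] at hdA
      have hn1 : ((n:ℚ)+1) ≠ 0 := by positivity
      exact mul_right_cancel₀ hn1 hdA

/-- There is a unique formal power series `A` over `ℚ` with zero constant coefficient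
satisfying `A' = A(e^X - 1) + 1`; moreover `n! * (coeff n A)` is always an integer
(the integers `1, 1, 2, 6, 26, 152, 1144, 10742, ...`, the eigen-sequence of
`R ∘ STIRLING`). -/
theorem stirling_transform_eigen_sequence :
    (∃! A : PowerSeries ℚ,
        PowerSeries.coeff 0 A = 0 ∧
        PowerSeries.derivative ℚ A =
          PowerSeries.substQ (PowerSeries.exp ℚ - 1) A + 1) ∧
    ∀ A : PowerSeries ℚ,
      PowerSeries.coeff 0 A = 0 →
      PowerSeries.derivative ℚ A = PowerSeries.substQ (PowerSeries.exp ℚ - 1) A + 1 →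
      ∀ n : ℕ, ∃ m : ℤ, (n.factorial : ℚ) * PowerSeries.coeff n A = (m : ℚ) := by
  constructor
  · exact ⟨Asol, Asol_spec, fun B hB => uniq_sol B Asol hB.1 hB.2 Asol_spec.1 Asol_spec.2⟩
  · intro A h0 hA n
    have : A = Asol := uniq_sol A Asol h0 hA Asol_spec.1 Asol_spec.2
    refine ⟨aSeq n, ?_⟩
    rw [this, Asol_coeff]
    have hfacn : ((n).factorial : ℚ) ≠ 0 := Nat.cast_ne_zero.mpr (Nat.factorial_ne_zero _)
    field_simp
end

section
/- Fix an integer r ≥ 2 and let A be the formal power series over ℚ with coefficients a_n = \binom{rn}{n} / ((r-1)n + 1) (the Fuss–Catalan numbers; a_0 = 1). Then X·A^r = A - 1. In particular, for r = 2 the Catalan numbers satisfy this equation, and these sequences shift one place left under r-fold self-convolution of the generating function. -/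
/-- The ordinary generating function of the Fuss–Catalan numbers
`a n = (choose (r*n) n) / ((r-1)*n + 1)`. -/
noncomputable def fussCatalanSeries (r : ℕ) : PowerSeries ℚ :=
  PowerSeries.mk fun n => (Nat.choose (r * n) n : ℚ) / (((r : ℚ) - 1) * n + 1)

/-!
The Raney series `B s = ∑ₙ s/(rn+s) · C(rn+s, n) Xⁿ` satisfy `B 0 = 1`, `B 1 = A` and the
Pascal-type recurrence `B (s+1) = B s + X · B (s+r)`. This recurrence alone forces
`B s = (B 1)ˢ`, and at `s = 0` it then reads `A = 1 + X · Aʳ`.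
-/

open PowerSeries

namespace PowerSeries

variable {R : Type*} [CommRing R]

theorem eq_zero_of_succ_eq_add_X_mul {D : ℕ → R⟦X⟧} (f : ℕ → ℕ) (h0 : D 0 = 0)
    (hD : ∀ m, D (m + 1) = D m + X * D (f m)) (m : ℕ) : D m = 0 := by
  suffices h : ∀ n m, coeff n (D m) = 0 from ext fun n => by simpa using h n m
  intro n
  induction n with
  | zero =>
    intro m
    induction m with
    | zero => simp [h0]
    | succ m ih => rw [hD, map_add, ih, coeff_zero_X_mul, add_zero]
  | succ n ihn =>
    intro m
    induction m with
    | zero => simp [h0]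
    | succ m ih => rw [hD, map_add, ih, coeff_succ_X_mul, ihn, add_zero]

variable {B : ℕ → R⟦X⟧} {r : ℕ}

theorem pow_eq_of_succ_eq_add_X_mul (h0 : B 0 = 1) (hB : ∀ s, B (s + 1) = B s + X * B (s + r))
    (s : ℕ) : B s = B 1 ^ s := by
  -- the defect `B m * B 1 - B (m + 1)` obeys the same recurrence and starts at `0`
  have hmul : ∀ m, B m * B 1 - B (m + 1) = 0 :=
    eq_zero_of_succ_eq_add_X_mul (D := fun m => B m * B 1 - B (m + 1)) (· + r)
      (by simp [h0]) fun m => by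
        simp only [hB (m + 1), hB m, Nat.add_right_comm m 1 r]
        ring
  induction s with
  | zero => simp [h0]
  | succ s ih => rw [pow_succ, ← ih, ← sub_eq_zero.mp (hmul s)]

theorem X_mul_pow_eq_sub_one_of_succ_eq_add_X_mul (h0 : B 0 = 1)
    (hB : ∀ s, B (s + 1) = B s + X * B (s + r)) : X * B 1 ^ r = B 1 - 1 := by
  rw [← pow_eq_of_succ_eq_add_X_mul h0 hB, hB 0, h0, zero_add, add_sub_cancel_left]

end PowerSeries

-- `raney r s n = s / (r n + s) * choose (r n + s) n`, the `n`-th coefficient of `Aˢ`,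
-- written without division
def raney (r s : ℕ) : ℕ → ℤ
  | 0 => 1
  | n + 1 => (r * n + r + s).choose (n + 1) - r * (r * n + r + s - 1).choose n

section Raney

variable {r : ℕ}

theorem raney_zero_succ (hr : 0 < r) (n : ℕ) : raney r 0 (n + 1) = 0 := by
  obtain ⟨M, hM⟩ : ∃ M, r * n + r = M + 1 := ⟨r * n + r - 1, by omega⟩
  have key : M.choose n * (r * (n + 1)) = (M + 1).choose (n + 1) * (n + 1) := by
    rw [← Nat.add_one_mul_choose_eq, ← hM]
    ring
  have hchoose : r * M.choose n = (M + 1).choose (n + 1) :=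
    Nat.eq_of_mul_eq_mul_right (by omega : 0 < n + 1) (by rw [← key]; ring)
  simp only [raney, add_zero, hM, Nat.add_sub_cancel]
  rw [← hchoose]
  push_cast
  ring

theorem raney_succ_succ (hr : 0 < r) (s n : ℕ) :
    raney r (s + 1) (n + 1) = raney r s (n + 1) + raney r (s + r) n := by
  cases n with
  | zero => simp [raney, Nat.choose_one_right]
  | succ j =>
    obtain ⟨M, hM⟩ : ∃ M, r * (j + 1) + r + s = M + 1 := ⟨r * (j + 1) + r + s - 1, by omega⟩
    have e1 : r * (j + 1) + r + (s + 1) = M + 1 + 1 := by omega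
    have e2 : r * j + r + (s + r) = M + 1 := by rw [← hM]; ring
    simp only [raney, e1, e2, hM, Nat.add_sub_cancel, Nat.choose_succ_succ' (M + 1),
      Nat.choose_succ_succ' M]
    push_cast
    ring

theorem raney_one (hr : 0 < r) (n : ℕ) :
    (raney r 1 n : ℚ) = (r * n).choose n / ((r - 1) * n + 1) := by
  cases n with
  | zero => simp [raney]
  | succ k =>
    obtain ⟨M, hM⟩ : ∃ M, r * k + r = M := ⟨_, rfl⟩
    have hkM : k < M := by nlinarith
    have h1 := Nat.add_one_mul_choose_eq M k
    have h2 := Nat.choose_succ_right_eq M k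
    have ht : ((r : ℚ) - 1) * (k + 1 : ℕ) + 1 = (M - k : ℕ) := by
      rw [Nat.cast_sub hkM.le, ← hM]; push_cast; ring
    have htpos : (0 : ℚ) < (M - k : ℕ) := by exact_mod_cast Nat.sub_pos_of_lt hkM
    simp only [raney, Nat.add_sub_cancel, show r * (k + 1) = M by rw [← hM]; ring, hM]
    rw [ht, eq_div_iff htpos.ne']
    qify at h1 h2 hM
    push_cast
    refine mul_right_cancel₀ (by positivity : (k + 1 : ℚ) ≠ 0) ?_
    linear_combination (-((M - k : ℕ) : ℚ)) * h1 - ((M - k : ℕ) : ℚ) * (M.choose k : ℚ) * hM - h2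

variable (R : Type*) [CommRing R]

def raneySeries (r s : ℕ) : R⟦X⟧ :=
  mk fun n => (raney r s n : R)

theorem raneySeries_zero (hr : 0 < r) : raneySeries R r 0 = 1 := by
  ext (_ | n)
  · simp [raneySeries, raney]
  · simp [raneySeries, raney_zero_succ hr, coeff_one]

theorem raneySeries_succ (hr : 0 < r) (s : ℕ) :
    raneySeries R r (s + 1) = raneySeries R r s + X * raneySeries R r (s + r) := by
  ext (_ | n)
  · simp [raneySeries, raney]
  · simp [raneySeries, raney_succ_succ hr, coeff_succ_X_mul]

theorem raneySeries_one (hr : 0 < r) : raneySeries ℚ r 1 = fussCatalanSeries r := by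
  ext n
  simp [raneySeries, fussCatalanSeries, raney_one hr]

end Raney

/-- For `r ≥ 2`, the generating function `A` of the Fuss–Catalan numbers
`a n = (choose (r*n) n)/((r-1)n + 1)` satisfies `X * A^r = A - 1`: the sequence is
shifted one place left by `r`-fold self-convolution.  For `r = 2` these are the
Catalan numbers. -/
theorem fussCatalan_conv_shift (r : ℕ) (hr : 2 ≤ r) :
    PowerSeries.X * (fussCatalanSeries r) ^ r = fussCatalanSeries r - 1 := by
  have hr₀ : 0 < r := by omega
  rw [← raneySeries_one hr₀]
  exact X_mul_pow_eq_sub_one_of_succ_eq_add_X_mul (raneySeries_zero ℚ hr₀) (raneySeries_succ ℚ hr₀)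
end

section
/- Define a : ℕ → ℕ by a_0 = 1, a_1 = 1, and a_{n+2} = \sum_{k=0}^{n} a_k·a_{n-k}. Then the ordinary generating function A(X) = \sum_{n\ge 0} a_n X^n, viewed as a formal power series over ℚ, satisfies (1 - 2X²·A)² = 1 - 4X² - 4X³; equivalently X²·A² = A - 1 - X, so that A = (1 - \sqrt{1 - 4x² - 4x³})/(2x²). -/
/-! The recurrence says that the coefficient of `X^(n+2)` in `A` is that of `X^n` in `A²`, so
`X²A² = A - 1 - X` once the first two coefficients are matched; multiplying by `4X²` and completing
the square gives `(1 - 2X²A)² = 1 - 4X² - 4X³`. -/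

namespace PowerSeries

theorem coeff_sq_eq_sum_range {R : Type*} [CommSemiring R] (f : R⟦X⟧) (n : ℕ) :
    coeff n (f ^ 2) = ∑ k ∈ Finset.range (n + 1), coeff k f * coeff (n - k) f := by
  rw [sq, coeff_mul, Finset.Nat.sum_antidiagonal_eq_sum_range_succ_mk]

theorem X_sq_mul_mk_sq_of_conv_shift_two {R : Type*} [CommRing R] (a : ℕ → R) (h0 : a 0 = 1)
    (h1 : a 1 = 1) (hrec : ∀ n : ℕ, a (n + 2) = ∑ k ∈ Finset.range (n + 1), a k * a (n - k)) :
    X ^ 2 * mk a ^ 2 = mk a - 1 - X := by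
  ext n
  rw [coeff_X_pow_mul']
  match n with
  | 0 => simp [h0]
  | 1 => simp [h1]
  | n + 2 => simp [coeff_sq_eq_sum_range, hrec, coeff_X]

end PowerSeries

theorem sq_one_sub_two_mul_sq_mul_of_sq_mul_sq {R : Type*} [CommRing R] {x A : R}
    (h : x ^ 2 * A ^ 2 = A - 1 - x) : (1 - 2 * x ^ 2 * A) ^ 2 = 1 - 4 * x ^ 2 - 4 * x ^ 3 := by
  linear_combination 4 * x ^ 2 * h

/-- Let `a 0 = 1`, `a 1 = 1` and `a (n+2) = ∑_{k=0}^{n} a k * a (n-k)` (the eigen-sequence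
of `R² ∘ CONV`, `[1,1,1,2,3,6,11,22,44,90,187,...]`).  Its ordinary generating function `A`
over `ℚ` satisfies `(1 - 2X²A)² = 1 - 4X² - 4X³`, equivalently `X²A² = A - 1 - X`, so that
`A = (1 - √(1 - 4x² - 4x³))/(2x²)`. -/
theorem conv_shift_two_eigen_sequence (a : ℕ → ℕ) (h0 : a 0 = 1) (h1 : a 1 = 1)
    (hrec : ∀ n : ℕ, a (n + 2) = ∑ k ∈ Finset.range (n + 1), a k * a (n - k)) :
    (1 - 2 * PowerSeries.X ^ 2 * PowerSeries.mk (fun n => (a n : ℚ))) ^ 2 =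
        1 - 4 * PowerSeries.X ^ 2 - 4 * PowerSeries.X ^ 3 ∧
    PowerSeries.X ^ 2 * PowerSeries.mk (fun n => (a n : ℚ)) ^ 2 =
        PowerSeries.mk (fun n => (a n : ℚ)) - 1 - PowerSeries.X := by
  have key := PowerSeries.X_sq_mul_mk_sq_of_conv_shift_two (fun n => (a n : ℚ))
    (by simp [h0]) (by simp [h1]) (fun n => by simp [hrec n])
  exact ⟨sq_one_sub_two_mul_sq_mul_of_sq_mul_sq key, key⟩
end

section
/- There exists a unique formal power series A over ℚ with constant coefficient 0 satisfying A² = (1 + X)·(A - X); moreover every coefficient of A is an integer (the coefficients are 1, 1, 1, 2, 4, 9, 21, 51, ..., i.e. 1 followed by the Motzkin numbers, the eigen-sequence of R²∘INVERT). -/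
open PowerSeries Finset

private def mz : ℕ → ℤ
  | 0 => 0
  | (n+1) => (∑ i ∈ (Finset.range n).attach, mz (i.1+1) * mz (n - i.1))
      - mz n + (if n = 0 then 1 else 0) + (if n = 1 then 1 else 0)
  decreasing_by
  all_goals first
    | omega
    | (have := i.2; simp only [Finset.mem_range] at this; omega)

private lemma mz_sum (n : ℕ) :
    ∑ p ∈ Finset.HasAntidiagonal.antidiagonal (n+1), mz p.1 * mz p.2
      = mz (n+1) + mz n - (if n = 0 then 1 else 0) - (if n = 1 then 1 else 0) := by
  rw [Finset.Nat.sum_antidiagonal_eq_sum_range_succ_mk]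
  rw [Finset.sum_range_succ]
  have h0 : mz 0 = 0 := by rw [mz]
  simp only [Nat.sub_self, h0, mul_zero, add_zero]
  rw [Finset.sum_range_succ']
  simp only [h0, zero_mul, add_zero]
  have : ∑ i ∈ Finset.range n, mz (i+1) * mz (n+1-(i+1))
      = ∑ i ∈ (Finset.range n).attach, mz (i.1+1) * mz (n - i.1) := by
    rw [← Finset.sum_attach (Finset.range n) (fun i => mz (i+1) * mz (n+1-(i+1)))]
    apply Finset.sum_congr rfl
    intro i _
    have h : n+1-(i.1+1) = n - i.1 := by omega
    rw [h]
  rw [this, mz]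
  ring

private lemma mz0 : mz 0 = 0 := by rw [mz]

private lemma coeff_forced (F : PowerSeries ℚ) (h0 : PowerSeries.coeff (R := ℚ) 0 F = 0)
    (heq : F ^ 2 = (1 + X) * (F - X)) :
    ∀ n, PowerSeries.coeff (R := ℚ) n F = (mz n : ℚ) := by
  intro n
  induction n using Nat.strong_induction_on with
  | _ n ih =>
    match n with
    | 0 => rw [h0, mz0]; norm_num
    | (N+1) =>
      have hr : (1 + X) * (F - X) = F - X + X * F - X ^ 2 := by ring
      have hc := congrArg (PowerSeries.coeff (R := ℚ) (N+1)) heq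
      rw [hr] at hc
      rw [pow_two, PowerSeries.coeff_mul] at hc
      simp only [map_sub, map_add, PowerSeries.coeff_succ_X_mul, PowerSeries.coeff_X,
        PowerSeries.coeff_X_pow] at hc
      have hterm : ∀ p ∈ Finset.HasAntidiagonal.antidiagonal (N+1),
          PowerSeries.coeff (R := ℚ) p.1 F * PowerSeries.coeff (R := ℚ) p.2 F
            = ((mz p.1 * mz p.2 : ℤ) : ℚ) := by
        intro p hp
        rw [Finset.HasAntidiagonal.mem_antidiagonal] at hp
        push_cast
        rcases Nat.eq_zero_or_pos p.1 with h1 | h1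
        · rw [h1, h0, mz0]; norm_num
        · rcases Nat.eq_zero_or_pos p.2 with h2 | h2
          · rw [h2, h0, mz0]; norm_num
          · rw [ih p.1 (by omega), ih p.2 (by omega)]
      rw [Finset.sum_congr rfl hterm, ← Int.cast_sum, mz_sum, ih N (by omega)] at hc
      have e1 : (if N + 1 = 1 then (1:ℚ) else 0) = (if N = 0 then 1 else 0) := by
        by_cases h : N = 0 <;> simp [h]
      have e2 : (if N + 1 = 2 then (1:ℚ) else 0) = (if N = 1 then 1 else 0) := by
        by_cases h : N = 1 <;> simp [h]
      rw [e1, e2] at hc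
      push_cast at hc
      rcases Nat.eq_zero_or_pos N with h | h
      · subst h; simp at hc ⊢; linarith
      · rcases eq_or_ne N 1 with h1 | h1
        · subst h1; simp at hc ⊢; linarith
        · simp [Nat.pos_iff_ne_zero.mp h, h1] at hc ⊢
          linarith

private noncomputable def M : PowerSeries ℚ := PowerSeries.mk fun n => (mz n : ℚ)

private lemma M0 : PowerSeries.coeff (R := ℚ) 0 M = 0 := by
  simp [M, mz0]

private lemma Meq : M ^ 2 = (1 + X) * (M - X) := by
  have hr : (1 + X) * (M - X) = M - X + X * M - X ^ 2 := by ring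
  rw [hr]
  ext n
  match n with
  | 0 =>
    rw [pow_two, PowerSeries.coeff_mul]
    simp [M, mz0]
  | (N+1) =>
    rw [pow_two, PowerSeries.coeff_mul]
    simp only [map_sub, map_add, PowerSeries.coeff_succ_X_mul, PowerSeries.coeff_X,
      PowerSeries.coeff_X_pow, M, PowerSeries.coeff_mk]
    have hsum : ∑ p ∈ Finset.HasAntidiagonal.antidiagonal (N+1), ((mz p.1 : ℚ) * (mz p.2 : ℚ))
        = ((∑ p ∈ Finset.HasAntidiagonal.antidiagonal (N+1), mz p.1 * mz p.2 : ℤ) : ℚ) := by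
      push_cast; rfl
    rw [hsum, mz_sum]
    have e1 : (if N + 1 = 1 then (1:ℚ) else 0) = (if N = 0 then 1 else 0) := by
      by_cases h : N = 0 <;> simp [h]
    have e2 : (if N + 1 = 2 then (1:ℚ) else 0) = (if N = 1 then 1 else 0) := by
      by_cases h : N = 1 <;> simp [h]
    rw [e1, e2]
    push_cast
    by_cases h : N = 0 <;> by_cases h1 : N = 1 <;> simp [h, h1] <;> ring

/-- There is a unique formal power series `A` over `ℚ` with zero constant coefficient
satisfying `A² = (1 + X)(A - X)`; moreover every coefficient of `A` is an integer
(the coefficients `1, 1, 1, 2, 4, 9, 21, 51, ...` are `1` followed by the Motzkin numbers,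
the eigen-sequence of `R² ∘ INVERT`). -/
theorem motzkin_invert_eigen_sequence :
    (∃! A : PowerSeries ℚ,
        PowerSeries.coeff (R := ℚ) 0 A = 0 ∧
        A ^ 2 = (1 + PowerSeries.X) * (A - PowerSeries.X)) ∧
    ∀ A : PowerSeries ℚ,
      PowerSeries.coeff (R := ℚ) 0 A = 0 →
      A ^ 2 = (1 + PowerSeries.X) * (A - PowerSeries.X) →
      ∀ n : ℕ, ∃ m : ℤ, PowerSeries.coeff (R := ℚ) n A = (m : ℚ) := by
  constructor
  · refine ⟨M, ⟨M0, Meq⟩, ?_⟩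
    rintro B ⟨hB0, hBeq⟩
    ext n
    rw [coeff_forced B hB0 hBeq n, coeff_forced M M0 Meq n]
  · intro A h0 heq n
    exact ⟨mz n, coeff_forced A h0 heq n⟩
end

section
/- There exists a unique formal power series A over ℚ with constant coefficient 0 satisfying 2A² - (1 + X)·A + X = 0; moreover every coefficient of A is an integer (the coefficients 1, 1, 3, 11, 45, 197, 903, ... are the super-Catalan/Schröder numbers), and A also satisfies (1 - A)·(1 + 2A - X) = 1 (so the sequence satisfies INVERT∘a = M∘a). -/
open PowerSeries Finset

private def sc : ℕ → ℤ
  | 0 => 0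
  | (n+1) => (if n = 0 then 1 else 0) - sc n
      + 2 * ∑ i ∈ Finset.range n, sc (n - i) * sc (n - (n - 1 - i))
  decreasing_by all_goals omega

private lemma sc_succ (n : ℕ) : sc (n+1) = (if n = 0 then 1 else 0) - sc n
      + 2 * ∑ i ∈ Finset.range n, sc (n - i) * sc (i + 1) := by
  rw [sc]
  congr 2
  apply Finset.sum_congr rfl
  intro i hi
  simp only [Finset.mem_range] at hi
  congr 2
  omega

noncomputable def SCA : PowerSeries ℚ := PowerSeries.mk (fun n => (sc n : ℚ))

lemma SCA_eq : 2 * SCA ^ 2 - (1 + PowerSeries.X) * SCA + PowerSeries.X = 0 := by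
  ext n
  have hsq : ∀ m : ℕ, (PowerSeries.coeff m) (SCA ^ 2)
      = ∑ k ∈ Finset.range (m+1), (sc k : ℚ) * sc (m - k) := by
    intro m
    rw [sq, PowerSeries.coeff_mul, Finset.Nat.sum_antidiagonal_eq_sum_range_succ_mk]
    simp [SCA]
  rcases n with _ | n
  · have h0 : sc 0 = 0 := by rw [sc]
    simp [hsq, h0, SCA]
  · have c2 : (PowerSeries.coeff (n+1)) (2 * SCA ^ 2)
        = 2 * ∑ k ∈ Finset.range (n+2), (sc k : ℚ) * sc (n+1-k) := by
      rw [two_mul, map_add, hsq, ← two_mul]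
    have c1 : (PowerSeries.coeff (n+1)) ((1 + PowerSeries.X) * SCA)
        = (sc (n+1) : ℚ) + sc n := by
      rw [add_mul, one_mul, map_add, PowerSeries.coeff_succ_X_mul]
      simp [SCA]
    have h0 : sc 0 = 0 := by rw [sc]
    have hS : ∑ k ∈ Finset.range (n+2), (sc k : ℚ) * sc (n+1-k)
        = ∑ i ∈ Finset.range n, (sc (n-i) : ℚ) * sc (i+1) := by
      rw [Finset.sum_range_succ', Finset.sum_range_succ]
      simp only [Nat.sub_self, h0, Int.cast_zero, mul_zero, zero_mul, add_zero]
      refine Finset.sum_congr rfl fun i hi => ?_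
      rw [show n + 1 - (i + 1) = n - i by omega]
      ring
    have hrec : (sc (n+1) : ℚ) = (if n = 0 then 1 else 0) - sc n
        + 2 * ∑ i ∈ Finset.range n, (sc (n-i) : ℚ) * sc (i+1) := by
      rw [sc_succ]
      split_ifs <;> push_cast <;> ring
    rw [map_add, map_sub, c2, c1, hS, PowerSeries.coeff_X, map_zero]
    rw [hrec]
    have : (n + 1 = 1) ↔ (n = 0) := by omega
    simp only [this]
    split_ifs <;> ring

lemma SCA_zero : PowerSeries.coeff 0 SCA = 0 := by
  have h0 : sc 0 = 0 := by rw [sc]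
  simp [SCA, h0]

/-- There is a unique formal power series `A` over `ℚ` with zero constant coefficient
satisfying `2A² - (1 + X)A + X = 0`; moreover every coefficient of `A` is an integer
(the super-Catalan/Schröder numbers `1, 1, 3, 11, 45, 197, 903, ...`), and `A` also
satisfies `(1 - A)(1 + 2A - X) = 1` (so the sequence satisfies `INVERT ∘ a = M ∘ a`). -/
theorem superCatalan_invert_eigen_sequence :
    (∃! A : PowerSeries ℚ,
        PowerSeries.coeff 0 A = 0 ∧
        2 * A ^ 2 - (1 + PowerSeries.X) * A + PowerSeries.X = 0) ∧
    ∀ A : PowerSeries ℚ,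
      PowerSeries.coeff 0 A = 0 →
      2 * A ^ 2 - (1 + PowerSeries.X) * A + PowerSeries.X = 0 →
      (∀ n : ℕ, ∃ m : ℤ, PowerSeries.coeff n A = (m : ℚ)) ∧
      (1 - A) * (1 + 2 * A - PowerSeries.X) = 1 := by
  constructor
  · refine ⟨SCA, ⟨SCA_zero, SCA_eq⟩, ?_⟩
    rintro B ⟨hB0, hBeq⟩
    have hfac : (B - SCA) * (2 * (B + SCA) - (1 + PowerSeries.X)) = 0 := by
      linear_combination hBeq - SCA_eq
    rcases mul_eq_zero.mp hfac with h | h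
    · exact sub_eq_zero.mp h
    · exfalso
      have := congrArg (PowerSeries.coeff 0) h
      simp [← PowerSeries.coeff_zero_eq_constantCoeff, two_mul, hB0, SCA_zero] at this
  · intro A hA0 hAeq
    have hAS : A = SCA := by
      have hfac : (A - SCA) * (2 * (A + SCA) - (1 + PowerSeries.X)) = 0 := by
        linear_combination hAeq - SCA_eq
      rcases mul_eq_zero.mp hfac with h | h
      · exact sub_eq_zero.mp h
      · exfalso
        have := congrArg (PowerSeries.coeff 0) h
        simp [← PowerSeries.coeff_zero_eq_constantCoeff, two_mul, hA0, SCA_zero] at this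
    constructor
    · intro n
      exact ⟨sc n, by simp [hAS, SCA]⟩
    · linear_combination (-1 : PowerSeries ℚ) * hAeq
end

section
/- There exists a unique formal power series A over ℚ with constant coefficient 0 satisfying exp(A) = 2A + 1 - X; moreover, for every n, n!·(coeff n A) is an integer (these integers 1, 1, 4, 26, 236, 2752, 39208, ... solve Schröder's fourth problem and count series-parallel networks). -/
/-- Substitution of the power series `a` (which should have zero constant term) into the
power series `f`, i.e. `f(a)`.  Since `a` has zero constant term, the coefficient of `X^n`
in `f(a)` is the finite sum `∑_{k=0}^{n} (coeff k f) * (coeff n (a^k))`. -/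
noncomputable def PowerSeries.substFin (a f : PowerSeries ℚ) : PowerSeries ℚ :=
  PowerSeries.mk fun n =>
    ∑ k ∈ Finset.range (n + 1), (PowerSeries.coeff k f) * (PowerSeries.coeff n (a ^ k))

open PowerSeries Finset
namespace SchroederAux

noncomputable def R : Subring ℚ := (Int.castRingHom ℚ).range

lemma natCast_mem_R (n : ℕ) : (n : ℚ) ∈ R := ⟨n, by simp⟩

lemma mem_R_iff (x : ℚ) : x ∈ R ↔ ∃ m : ℤ, x = (m : ℚ) := by
  constructor
  · rintro ⟨m, rfl⟩; exact ⟨m, rfl⟩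
  · rintro ⟨m, rfl⟩; exact ⟨m, rfl⟩

lemma constantCoeff_pow_eq_zero {A : PowerSeries ℚ} (h0 : PowerSeries.coeff 0 A = 0)
    {k : ℕ} (hk : 1 ≤ k) : PowerSeries.coeff 0 (A ^ k) = 0 := by
  rw [PowerSeries.coeff_zero_eq_constantCoeff] at h0 ⊢
  rw [map_pow, h0, zero_pow (by omega)]

lemma coeff_pow_congr {A B : PowerSeries ℚ} (hA : PowerSeries.coeff 0 A = 0)
    (hB : PowerSeries.coeff 0 B = 0) {n : ℕ}
    (h : ∀ i < n, PowerSeries.coeff i A = PowerSeries.coeff i B) :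
    ∀ k, k ≠ 1 → ∀ m ≤ n, PowerSeries.coeff m (A ^ k) = PowerSeries.coeff m (B ^ k) := by
  intro k
  induction k with
  | zero => intro _ m _; simp
  | succ k ih =>
    intro hk1 m hm
    have hk : 1 ≤ k := by omega
    rw [pow_succ', pow_succ', PowerSeries.coeff_mul, PowerSeries.coeff_mul]
    refine Finset.sum_congr rfl fun p hp => ?_
    have hpsum : p.1 + p.2 = m := Finset.HasAntidiagonal.mem_antidiagonal.mp hp
    rcases Nat.eq_zero_or_pos p.1 with h1 | h1
    · rw [h1, hA, hB, zero_mul, zero_mul]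
    rcases Nat.eq_zero_or_pos p.2 with h2 | h2
    · rw [h2, constantCoeff_pow_eq_zero hA hk, constantCoeff_pow_eq_zero hB hk, mul_zero, mul_zero]
    have hp1lt : p.1 < n := by omega
    have hp2le : p.2 ≤ n := by omega
    rw [h p.1 hp1lt]
    rcases eq_or_ne k 1 with rfl | hk1'
    · have hp2lt : p.2 < n := by omega
      rw [pow_one, pow_one, h p.2 hp2lt]
    · rw [ih hk1' p.2 hp2le]

/-- coefficient of `subst A exp` for `n ≥ 1` -/
lemma coeff_subst_exp (A : PowerSeries ℚ) {n : ℕ} (hn : 1 ≤ n) :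
    PowerSeries.coeff n (PowerSeries.substFin A (PowerSeries.exp ℚ))
      = PowerSeries.coeff n A
          + ∑ k ∈ Finset.Icc 2 n, (1/(k.factorial:ℚ)) * PowerSeries.coeff n (A ^ k) := by
  rw [PowerSeries.substFin, PowerSeries.coeff_mk]
  have hsplit : Finset.range (n+1) = insert 0 (insert 1 (Finset.Icc 2 n)) := by
    ext x
    simp only [Finset.mem_range, Finset.mem_insert, Finset.mem_Icc]
    omega
  rw [hsplit, Finset.sum_insert (by simp), Finset.sum_insert (by simp)]
  have h0 : PowerSeries.coeff n ((A:ℚ⟦X⟧) ^ 0) = 0 := by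
    rw [pow_zero, PowerSeries.coeff_one, if_neg (by omega)]
  rw [h0, mul_zero, zero_add]
  simp only [PowerSeries.coeff_exp]
  norm_num

lemma coeff_rhs (A : PowerSeries ℚ) {n : ℕ} (hn : 1 ≤ n) :
    PowerSeries.coeff n (2 * A + 1 - PowerSeries.X)
      = 2 * PowerSeries.coeff n A - (if n = 1 then 1 else 0) := by
  have h2 : (2 : ℚ⟦X⟧) * A = A + A := two_mul A
  rw [map_sub, map_add, h2, map_add, PowerSeries.coeff_one, if_neg (by omega),
    PowerSeries.coeff_X]
  split_ifs <;> ring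

lemma char (A : PowerSeries ℚ) (h0 : PowerSeries.coeff 0 A = 0) :
    PowerSeries.substFin A (PowerSeries.exp ℚ) = 2 * A + 1 - PowerSeries.X ↔
      ∀ n, 1 ≤ n → PowerSeries.coeff n A
        = (if n = 1 then 1 else 0)
          + ∑ k ∈ Finset.Icc 2 n, (1/(k.factorial:ℚ)) * PowerSeries.coeff n (A ^ k) := by
  rw [PowerSeries.ext_iff]
  constructor
  · intro h n hn
    have := h n
    rw [coeff_subst_exp A hn, coeff_rhs A hn] at this
    linarith [this]
  · intro h n
    rcases Nat.eq_zero_or_pos n with rfl | hn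
    · have h2 : (2:ℚ⟦X⟧) * A = A + A := two_mul A
      rw [PowerSeries.substFin, PowerSeries.coeff_mk, h2, map_sub, map_add, map_add, h0]
      simp [PowerSeries.coeff_exp]
    · rw [coeff_subst_exp A hn, coeff_rhs A hn]
      have := h n hn
      linarith [this]

noncomputable def seq : ℕ → ℚ
  | n => (if n = 1 then 1 else 0) + ∑ k ∈ Finset.Icc 2 n, (1/(k.factorial:ℚ)) *
      PowerSeries.coeff n ((PowerSeries.mk fun i => if _h : i < n then seq i else 0) ^ k)
  termination_by n => n
  decreasing_by exact _h

lemma seq_zero : seq 0 = 0 := by rw [seq]; simp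

/-- the truncated series at level n -/
noncomputable def B (g : ℕ → ℚ) (n : ℕ) : PowerSeries ℚ :=
  PowerSeries.mk fun i => if _h : i < n then g i else 0

lemma coeff_B (g : ℕ → ℚ) (n i : ℕ) :
    PowerSeries.coeff i (B g n) = if i < n then g i else 0 := by
  rw [B, PowerSeries.coeff_mk]
  split_ifs <;> rfl

lemma seq_eq (n : ℕ) : seq n = (if n = 1 then 1 else 0)
    + ∑ k ∈ Finset.Icc 2 n, (1/(k.factorial:ℚ)) * PowerSeries.coeff n ((B seq n) ^ k) := by
  rw [seq, B]

lemma coeff_B_zero (g : ℕ → ℚ) (hg : g 0 = 0) (n : ℕ) :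
    PowerSeries.coeff 0 (B g n) = 0 := by
  rw [coeff_B]; split_ifs <;> simp [hg]

/-- any solution has coefficients `seq` -/
lemma sol_coeff (A : PowerSeries ℚ) (h0 : PowerSeries.coeff 0 A = 0)
    (heq : PowerSeries.substFin A (PowerSeries.exp ℚ) = 2 * A + 1 - PowerSeries.X) :
    ∀ n, PowerSeries.coeff n A = seq n := by
  intro n
  induction n using Nat.strong_induction_on with
  | _ n ih =>
    rcases Nat.eq_zero_or_pos n with rfl | hn
    · rw [h0, seq_zero]
    · rw [(char A h0).mp heq n hn, seq_eq n]
      congr 1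
      refine Finset.sum_congr rfl fun k hk => ?_
      congr 1
      refine coeff_pow_congr h0 (coeff_B_zero seq seq_zero n) (fun i hi => ?_) k
        (by simp only [Finset.mem_Icc] at hk; omega) n le_rfl
      rw [coeff_B, if_pos hi, ih i hi]

/-- `mk seq` is a solution -/
lemma mk_seq_sol : PowerSeries.coeff 0 (PowerSeries.mk seq) = 0 ∧
    PowerSeries.substFin (PowerSeries.mk seq) (PowerSeries.exp ℚ)
      = 2 * PowerSeries.mk seq + 1 - PowerSeries.X := by
  have h0 : PowerSeries.coeff 0 (PowerSeries.mk seq) = 0 := by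
    rw [PowerSeries.coeff_mk]; exact seq_zero
  refine ⟨h0, (char _ h0).mpr fun n hn => ?_⟩
  rw [PowerSeries.coeff_mk, seq_eq n]
  congr 1
  refine Finset.sum_congr rfl fun k hk => ?_
  congr 1
  refine coeff_pow_congr (coeff_B_zero seq seq_zero n) h0 (fun i hi => ?_) k
    (by simp only [Finset.mem_Icc] at hk; omega) n le_rfl
  rw [coeff_B, if_pos hi, PowerSeries.coeff_mk]

lemma derivIdent (A : PowerSeries ℚ) (k n : ℕ) :
    ((n:ℚ)+1) * PowerSeries.coeff (n+1) (A ^ (k+1)) =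
      ((k:ℚ)+1) * ∑ p ∈ antidiagonal n,
        PowerSeries.coeff p.1 (A^k) * (((p.2:ℚ)+1) * PowerSeries.coeff (p.2+1) A) := by
  have h := Derivation.leibniz_pow (PowerSeries.derivative ℚ) A (k+1)
  have h2 := congrArg (PowerSeries.coeff n) h
  rw [PowerSeries.coeff_derivative] at h2
  simp only [Nat.add_sub_cancel, smul_smul, nsmul_eq_mul, smul_eq_mul] at h2
  push_cast at h2
  rw [mul_comm, h2]
  have h3 : ((k:ℚ⟦X⟧) + 1) * (A ^ k * (d⁄dX ℚ) A)
      = PowerSeries.C ((k:ℚ)+1) * (A ^ k * (d⁄dX ℚ) A) := by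
    simp [map_add, map_natCast]
  rw [h3, PowerSeries.coeff_C_mul, PowerSeries.coeff_mul]
  congr 1
  refine Finset.sum_congr rfl fun p hp => ?_
  rw [PowerSeries.coeff_derivative]
  ring

lemma int_coeff_pow (A : PowerSeries ℚ) (h0 : PowerSeries.coeff 0 A = 0)
    (hint : ∀ j : ℕ, (j.factorial : ℚ) * PowerSeries.coeff j A ∈ R) :
    ∀ k n : ℕ, ((n.factorial : ℚ) / (k.factorial : ℚ)) * PowerSeries.coeff n (A ^ k) ∈ R := by
  intro k
  induction k with
  | zero =>
    intro n
    simp only [Nat.factorial_zero, Nat.cast_one, div_one, pow_zero, PowerSeries.coeff_one]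
    split_ifs
    · simpa using natCast_mem_R n.factorial
    · simp [R.zero_mem]
  | succ k ih =>
    intro n
    match n with
    | 0 =>
      rw [constantCoeff_pow_eq_zero h0 (by omega)]
      simpa using R.zero_mem
    | n + 1 =>
      have key := derivIdent A k n
      have hne : ((n:ℚ)+1) ≠ 0 := by positivity
      have hkne : ((k:ℚ)+1) ≠ 0 := by positivity
      have hkf : (k.factorial : ℚ) ≠ 0 := Nat.cast_ne_zero.mpr k.factorial_ne_zero
      have hS : PowerSeries.coeff (n+1) (A^(k+1))
          = ((k:ℚ)+1) / ((n:ℚ)+1) * ∑ p ∈ antidiagonal n,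
              PowerSeries.coeff p.1 (A^k) * (((p.2:ℚ)+1) * PowerSeries.coeff (p.2+1) A) := by
        rw [div_mul_eq_mul_div, eq_div_iff hne]
        linarith [key]
      have heq : ((n+1).factorial : ℚ) / ((k+1).factorial : ℚ)
            * PowerSeries.coeff (n+1) (A ^ (k+1))
          = ∑ p ∈ antidiagonal n,
              (n.choose p.2 : ℚ) * (((p.2+1).factorial : ℚ) * PowerSeries.coeff (p.2+1) A)
                * (((p.1.factorial : ℚ) / (k.factorial : ℚ)) * PowerSeries.coeff p.1 (A^k)) := by
        rw [hS, ← mul_assoc, Finset.mul_sum]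
        refine Finset.sum_congr rfl fun p hp => ?_
        have hpsum : p.1 + p.2 = n := Finset.HasAntidiagonal.mem_antidiagonal.mp hp
        have hp1 : (p.1.factorial : ℚ) ≠ 0 := Nat.cast_ne_zero.mpr p.1.factorial_ne_zero
        have hp2 : (p.2.factorial : ℚ) ≠ 0 := Nat.cast_ne_zero.mpr p.2.factorial_ne_zero
        have hch : (n.choose p.2 : ℚ)
            = (n.factorial : ℚ) / ((p.2.factorial : ℚ) * (p.1.factorial : ℚ)) := by
          rw [eq_div_iff (by positivity)]
          have := Nat.choose_mul_factorial_mul_factorial (show p.2 ≤ n by omega)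
          have h1 : n - p.2 = p.1 := by omega
          rw [h1] at this
          push_cast [← this]
          ring
        have hf1 : (((p.2)+1).factorial : ℚ) = (p.2.factorial : ℚ) * ((p.2:ℚ)+1) := by
          rw [Nat.factorial_succ]; push_cast; ring
        have hf2 : ((n+1).factorial : ℚ) = (n.factorial : ℚ) * ((n:ℚ)+1) := by
          rw [Nat.factorial_succ]; push_cast; ring
        have hf3 : ((k+1).factorial : ℚ) = (k.factorial : ℚ) * ((k:ℚ)+1) := by
          rw [Nat.factorial_succ]; push_cast; ring
        rw [hch, hf1, hf2, hf3]
        field_simp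
      rw [heq]
      refine Subring.sum_mem R fun p hp => ?_
      exact R.mul_mem (R.mul_mem (natCast_mem_R _) (hint _)) (ih p.1)

lemma sol_int (A : PowerSeries ℚ) (h0 : PowerSeries.coeff 0 A = 0)
    (heq : PowerSeries.substFin A (PowerSeries.exp ℚ) = 2 * A + 1 - PowerSeries.X) :
    ∀ n : ℕ, (n.factorial : ℚ) * PowerSeries.coeff n A ∈ R := by
  intro n
  induction n using Nat.strong_induction_on with
  | _ n ih =>
    rcases Nat.eq_zero_or_pos n with rfl | hn
    · rw [h0, mul_zero]; exact R.zero_mem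
    · set Bn : PowerSeries ℚ := B (fun i => PowerSeries.coeff i A) n with hBn
      have hB0 : PowerSeries.coeff 0 Bn = 0 := coeff_B_zero _ h0 n
      have hBint : ∀ j : ℕ, (j.factorial : ℚ) * PowerSeries.coeff j Bn ∈ R := by
        intro j
        rw [hBn, coeff_B]
        split_ifs with hj
        · exact ih j hj
        · rw [mul_zero]; exact R.zero_mem
      have hBpow := int_coeff_pow Bn hB0 hBint
      rw [(char A h0).mp heq n hn]
      rw [mul_add, Finset.mul_sum]
      refine R.add_mem ?_ (Subring.sum_mem R fun k hk => ?_)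
      · split_ifs
        · rw [mul_one]; exact natCast_mem_R _
        · rw [mul_zero]; exact R.zero_mem
      · have hck : PowerSeries.coeff n (A ^ k) = PowerSeries.coeff n (Bn ^ k) := by
          refine coeff_pow_congr h0 hB0 (fun i hi => ?_) k
            (by simp only [Finset.mem_Icc] at hk; omega) n le_rfl
          rw [hBn, coeff_B, if_pos hi]
        rw [hck]
        have : (n.factorial : ℚ) * ((1/(k.factorial:ℚ)) * PowerSeries.coeff n (Bn ^ k))
            = ((n.factorial : ℚ) / (k.factorial : ℚ)) * PowerSeries.coeff n (Bn ^ k) := by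
          ring
        rw [this]
        exact hBpow k n

end SchroederAux

/-- There is a unique formal power series `A` over `ℚ` with zero constant coefficient
satisfying `exp(A) = 2A + 1 - X`; moreover `n! * (coeff n A)` is always an integer
(the integers `1, 1, 4, 26, 236, 2752, 39208, ...` solving Schröder's fourth problem
and counting series-parallel networks). -/
theorem schroeder_fourth_exp_eigen_sequence :
    (∃! A : PowerSeries ℚ,
        PowerSeries.coeff 0 A = 0 ∧
        PowerSeries.substFin A (PowerSeries.exp ℚ) = 2 * A + 1 - PowerSeries.X) ∧
    ∀ A : PowerSeries ℚ,
      PowerSeries.coeff 0 A = 0 →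
      PowerSeries.substFin A (PowerSeries.exp ℚ) = 2 * A + 1 - PowerSeries.X →
      ∀ n : ℕ, ∃ m : ℤ, (n.factorial : ℚ) * PowerSeries.coeff n A = (m : ℚ) := by
  constructor
  · refine ⟨PowerSeries.mk SchroederAux.seq, SchroederAux.mk_seq_sol, ?_⟩
    rintro A ⟨h0, heq⟩
    ext n
    rw [PowerSeries.coeff_mk]
    exact SchroederAux.sol_coeff A h0 heq n
  · intro A h0 heq n
    exact (SchroederAux.mem_R_iff _).mp (SchroederAux.sol_int A h0 heq n)
end

section
/- There exists a unique formal power series A over ℚ with constant coefficient 0 satisfying exp(A) = 1 + 2X - A; moreover, for every n ≥ 1, 2^{n-1}·n!·(coeff n A) is an integer (these integers 1, -1, 1, 1, -13, 47, 73, -2447, 16811, ... arise in the computation of Airey's converging factor for asymptotic series). -/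
/-- Substitution of the power series `a` (which should have zero constant term) into the
power series `f`, i.e. `f(a)`.  Since `a` has zero constant term, the coefficient of `X^n`
in `f(a)` is the finite sum `∑_{k=0}^{n} (coeff k f) * (coeff n (a^k))`. -/
noncomputable def PowerSeries.substRat (a f : PowerSeries ℚ) : PowerSeries ℚ :=
  PowerSeries.mk fun n =>
    ∑ k ∈ Finset.range (n + 1), (PowerSeries.coeff k f) * (PowerSeries.coeff n (a ^ k))

open PowerSeries Finset

noncomputable def aa : ℕ → ℚ
  | 0 => 0
  | (n+1) => ((if n = 0 then 2 else 0) - 2*n*aa n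
      + ∑ i ∈ (Finset.range n).attach, ((i:ℕ)+1) * aa (i+1) * aa (n - i)) / (2*(n+1))
  decreasing_by
  all_goals try omega
  have := i.2
  simp only [Finset.mem_range] at this
  omega

lemma aa_zero : aa 0 = 0 := by rw [aa]

lemma aa_rec (n : ℕ) : 2*((n:ℚ)+1)*aa (n+1) =
    (if n = 0 then 2 else 0) - 2*n*aa n
      + ∑ i ∈ Finset.range n, ((i:ℚ)+1) * aa (i+1) * aa (n - i) := by
  rw [aa, mul_comm, div_mul_cancel₀ _ (by positivity : (2*((n:ℚ)+1)) ≠ 0)]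
  congr 1
  exact Finset.sum_attach (Finset.range n) (fun j => ((j:ℚ)+1) * aa (j+1) * aa (n - j))

lemma coeff_pow_zero (A : PowerSeries ℚ) (h0 : PowerSeries.coeff 0 A = 0)
    {n k : ℕ} (hk : n < k) : PowerSeries.coeff n (A ^ k) = 0 := by
  have hX : (PowerSeries.X : PowerSeries ℚ) ∣ A := by
    rw [PowerSeries.X_dvd_iff, ← PowerSeries.coeff_zero_eq_constantCoeff_apply]
    exact h0
  exact (PowerSeries.X_pow_dvd_iff.mp (pow_dvd_pow_of_dvd hX k)) n hk

lemma coeff_subst_exp (A : PowerSeries ℚ) (n : ℕ) :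
    PowerSeries.coeff n (PowerSeries.substRat A (PowerSeries.exp ℚ)) =
      ∑ k ∈ Finset.range (n + 1), (1 / (k.factorial : ℚ)) * PowerSeries.coeff n (A ^ k) := by
  simp [PowerSeries.substRat, PowerSeries.coeff_exp]

lemma coeff_dpow (A : PowerSeries ℚ) (j n : ℕ) :
    PowerSeries.coeff n (d⁄dX ℚ (A^(j+1))) = (j+1) * PowerSeries.coeff n (A^j * d⁄dX ℚ A) := by
  rw [Derivation.leibniz_pow]
  simp only [smul_eq_mul, nsmul_eq_mul, Nat.add_sub_cancel]
  rw [← map_natCast (PowerSeries.C (R := ℚ)) (j+1), PowerSeries.coeff_C_mul]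
  push_cast
  ring

lemma deriv_subst_exp (A : PowerSeries ℚ) (h0 : PowerSeries.coeff 0 A = 0) :
    d⁄dX ℚ (PowerSeries.substRat A (PowerSeries.exp ℚ)) =
      d⁄dX ℚ A * PowerSeries.substRat A (PowerSeries.exp ℚ) := by
  rw [mul_comm]
  ext n
  rw [PowerSeries.coeff_derivative, PowerSeries.coeff_mul, coeff_subst_exp, Finset.sum_mul]
  have h1 : ∀ k ∈ Finset.range (n+2),
      (1/(k.factorial:ℚ)) * PowerSeries.coeff (n+1) (A^k) * (n+1)
        = (1/(k.factorial:ℚ)) * PowerSeries.coeff n (d⁄dX ℚ (A^k)) := by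
    intro k _
    rw [PowerSeries.coeff_derivative]
    ring
  rw [Finset.sum_congr rfl h1, Finset.sum_range_succ']
  have h2 : ∀ j ∈ Finset.range (n+1),
      (1/((j+1).factorial:ℚ)) * PowerSeries.coeff n (d⁄dX ℚ (A^(j+1)))
        = ∑ p ∈ Finset.HasAntidiagonal.antidiagonal n,
            PowerSeries.coeff p.1 (A^j) * ((1/(j.factorial:ℚ)) * PowerSeries.coeff p.2 (d⁄dX ℚ A)) := by
    intro j _
    have hr : ∑ p ∈ Finset.HasAntidiagonal.antidiagonal n,
        PowerSeries.coeff p.1 (A^j) * ((1/(j.factorial:ℚ)) * PowerSeries.coeff p.2 (d⁄dX ℚ A))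
        = (1/(j.factorial:ℚ)) * PowerSeries.coeff n (A^j * d⁄dX ℚ A) := by
      rw [PowerSeries.coeff_mul, Finset.mul_sum]
      exact Finset.sum_congr rfl fun p _ => by ring
    rw [hr, coeff_dpow, Nat.factorial_succ]
    have h1 : ((j.factorial:ℚ)) ≠ 0 := by positivity
    have h2 : ((j:ℚ)+1) ≠ 0 := by positivity
    push_cast
    field_simp
  rw [Finset.sum_congr rfl h2]
  have h3 : (1/((Nat.factorial 0):ℚ)) * PowerSeries.coeff n (d⁄dX ℚ (A^0)) = 0 := by
    simp
  rw [h3, add_zero, Finset.sum_comm]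
  apply Finset.sum_congr rfl
  intro p hp
  rw [Finset.HasAntidiagonal.mem_antidiagonal] at hp
  have hp1 : p.1 ≤ n := by omega
  rw [coeff_subst_exp, Finset.sum_mul]
  rw [← Finset.sum_subset (Finset.range_subset_range.mpr (by omega : p.1 + 1 ≤ n + 1))]
  · apply Finset.sum_congr rfl
    intro j _
    ring
  · intro j _ hj
    rw [Finset.mem_range, not_lt] at hj
    rw [coeff_pow_zero A h0 (by omega : p.1 < j)]
    ring

lemma ode_unique (A g h : PowerSeries ℚ)
    (hg : d⁄dX ℚ g = d⁄dX ℚ A * g) (hh : d⁄dX ℚ h = d⁄dX ℚ A * h)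
    (h0 : PowerSeries.coeff 0 g = PowerSeries.coeff 0 h) : g = h := by
  ext n
  induction n using Nat.strong_induction_on with
  | _ n ih =>
    match n with
    | 0 => exact h0
    | (m+1) =>
      have hgm := congrArg (PowerSeries.coeff m) hg
      have hhm := congrArg (PowerSeries.coeff m) hh
      rw [PowerSeries.coeff_derivative, PowerSeries.coeff_mul] at hgm hhm
      have hs : ∑ p ∈ Finset.HasAntidiagonal.antidiagonal m,
          PowerSeries.coeff p.1 (d⁄dX ℚ A) * PowerSeries.coeff p.2 g
          = ∑ p ∈ Finset.HasAntidiagonal.antidiagonal m,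
          PowerSeries.coeff p.1 (d⁄dX ℚ A) * PowerSeries.coeff p.2 h := by
        refine Finset.sum_congr rfl fun p hp => ?_
        rw [Finset.HasAntidiagonal.mem_antidiagonal] at hp
        rw [ih p.2 (by omega)]
      have : PowerSeries.coeff (m+1) g * (m+1) = PowerSeries.coeff (m+1) h * (m+1) := by
        rw [hgm, hhm, hs]
      exact mul_right_cancel₀ (by positivity : ((m:ℚ)+1) ≠ 0) this

lemma coeff_twoX (k : ℕ) : PowerSeries.coeff k (2*PowerSeries.X : PowerSeries ℚ) = if k = 1 then 2 else 0 := by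
  rw [← map_ofNat (PowerSeries.C (R := ℚ)) 2, PowerSeries.coeff_C_mul, PowerSeries.coeff_X]
  split <;> norm_num

lemma ode_iff_rec (B : PowerSeries ℚ) (h0 : PowerSeries.coeff 0 B = 0) (n : ℕ) :
    (PowerSeries.coeff n (d⁄dX ℚ (1 + 2*PowerSeries.X - B)) =
      PowerSeries.coeff n (d⁄dX ℚ B * (1 + 2*PowerSeries.X - B))) ↔
    2*((n:ℚ)+1)*PowerSeries.coeff (n+1) B =
      (if n = 0 then 2 else 0) - 2*n*PowerSeries.coeff n B
        + ∑ i ∈ Finset.range n, ((i:ℚ)+1) * PowerSeries.coeff (i+1) B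
            * PowerSeries.coeff (n-i) B := by
  rw [PowerSeries.coeff_derivative, PowerSeries.coeff_mul,
    Finset.Nat.sum_antidiagonal_eq_sum_range_succ_mk]
  have hcoe : ∀ k, PowerSeries.coeff k ((1:PowerSeries ℚ) + 2*PowerSeries.X - B)
      = (if k = 0 then 1 else 0) + (if k = 1 then 2 else 0) - PowerSeries.coeff k B := by
    intro k
    rw [map_sub, map_add, PowerSeries.coeff_one, coeff_twoX]
  rw [hcoe]
  have hterm : ∀ k ∈ Finset.range (n+1),
      PowerSeries.coeff k (d⁄dX ℚ B) * (PowerSeries.coeff (n-k) (1 + 2*PowerSeries.X - B))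
      = ((if k = n then ((n:ℚ)+1) * PowerSeries.coeff (n+1) B else 0)
        + (if n ≠ 0 ∧ k = n-1 then 2*(n:ℚ)*PowerSeries.coeff n B else 0))
        - PowerSeries.coeff k (d⁄dX ℚ B) * PowerSeries.coeff (n-k) B := by
    intro k hk
    rw [Finset.mem_range] at hk
    rw [hcoe, PowerSeries.coeff_derivative]
    rcases Nat.eq_or_lt_of_le (Nat.lt_succ_iff.mp hk) with h | h
    · rw [if_pos h, if_neg (show ¬ (n ≠ 0 ∧ k = n - 1) by omega),
        show n - k = 0 from by omega, h0, if_neg (show ¬ (0 = 1) by omega),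
        if_pos rfl, h]
      ring
    · rw [if_neg (show ¬ (n - k = 0) by omega), if_neg (show ¬ (k = n) by omega)]
      by_cases h1 : n - k = 1
      · rw [if_pos h1, if_pos (show n ≠ 0 ∧ k = n - 1 by omega),
          show k + 1 = n from by omega]
        have hc : ((k:ℚ)+1) = (n:ℚ) := by
          have : k + 1 = n := by omega
          exact_mod_cast congrArg (Nat.cast : ℕ → ℚ) this
        rw [hc]
        ring
      · rw [if_neg h1, if_neg (show ¬ (n ≠ 0 ∧ k = n - 1) by omega)]
        ring
  rw [Finset.sum_congr rfl hterm, Finset.sum_sub_distrib, Finset.sum_add_distrib,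
    Finset.sum_ite_eq' (Finset.range (n+1)) n
      (fun _ => ((n:ℚ)+1) * PowerSeries.coeff (n+1) B),
    if_pos (Finset.self_mem_range_succ n)]
  have hT2 : (∑ k ∈ Finset.range (n+1),
      if n ≠ 0 ∧ k = n-1 then 2*(n:ℚ)*PowerSeries.coeff n B else 0)
      = 2*(n:ℚ)*PowerSeries.coeff n B := by
    by_cases hn : n = 0
    · subst hn; simp
    · rw [Finset.sum_eq_single (n-1)]
      · rw [if_pos ⟨hn, rfl⟩]
      · intro k _ hk; rw [if_neg (by tauto)]
      · intro hmem; exact absurd (Finset.mem_range.mpr (by omega)) hmem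
  rw [hT2]
  have hT3 : (∑ k ∈ Finset.range (n+1),
      PowerSeries.coeff k (d⁄dX ℚ B) * PowerSeries.coeff (n-k) B)
      = ∑ i ∈ Finset.range n, ((i:ℚ)+1) * PowerSeries.coeff (i+1) B
          * PowerSeries.coeff (n-i) B := by
    rw [Finset.sum_range_succ, Nat.sub_self, h0, mul_zero, add_zero]
    refine Finset.sum_congr rfl fun k _ => ?_
    rw [PowerSeries.coeff_derivative]
    ring
  rw [hT3, if_neg (show ¬ (n+1 = 0) by omega)]
  have hif : (if n + 1 = 1 then (2:ℚ) else 0) = (if n = 0 then 2 else 0) := by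
    by_cases hn : n = 0 <;> simp [hn]
  rw [hif]
  have hc : (if n = 0 then (2:ℚ) else 0) * ((n:ℚ)+1) = (if n = 0 then 2 else 0) := by
    by_cases hn : n = 0 <;> simp [hn]
  constructor <;> intro h <;> linear_combination hc - h

lemma mkaa_zero : PowerSeries.coeff 0 (PowerSeries.mk aa) = 0 := by
  rw [PowerSeries.coeff_mk, aa_zero]

lemma mkaa_ode : d⁄dX ℚ (1 + 2*PowerSeries.X - PowerSeries.mk aa) =
    d⁄dX ℚ (PowerSeries.mk aa) * (1 + 2*PowerSeries.X - PowerSeries.mk aa) := by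
  ext n
  refine (ode_iff_rec (PowerSeries.mk aa) mkaa_zero n).mpr ?_
  simp only [PowerSeries.coeff_mk]
  exact aa_rec n

lemma mkaa_sol : PowerSeries.substRat (PowerSeries.mk aa) (PowerSeries.exp ℚ)
    = 1 + 2 * PowerSeries.X - PowerSeries.mk aa := by
  refine ode_unique (PowerSeries.mk aa) _ _
    (deriv_subst_exp (PowerSeries.mk aa) mkaa_zero) mkaa_ode ?_
  rw [coeff_subst_exp]
  rw [map_sub, map_add, PowerSeries.coeff_one, coeff_twoX, mkaa_zero]
  norm_num

lemma coeff_eq_aa (B : PowerSeries ℚ) (h0 : PowerSeries.coeff 0 B = 0)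
    (heq : PowerSeries.substRat B (PowerSeries.exp ℚ) = 1 + 2 * PowerSeries.X - B) :
    ∀ n, PowerSeries.coeff n B = aa n := by
  have hode : d⁄dX ℚ (1 + 2*PowerSeries.X - B) = d⁄dX ℚ B * (1 + 2*PowerSeries.X - B) := by
    rw [← heq]
    exact deriv_subst_exp B h0
  intro n
  induction n using Nat.strong_induction_on with
  | _ n ih =>
    match n with
    | 0 => rw [h0, aa_zero]
    | (m+1) =>
      have hr := (ode_iff_rec B h0 m).mp (congrArg (PowerSeries.coeff m) hode)
      rw [ih m (by omega)] at hr
      have hs : ∑ i ∈ Finset.range m, ((i:ℚ)+1) * PowerSeries.coeff (i+1) B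
          * PowerSeries.coeff (m-i) B
          = ∑ i ∈ Finset.range m, ((i:ℚ)+1) * aa (i+1) * aa (m-i) := by
        refine Finset.sum_congr rfl fun i hi => ?_
        rw [Finset.mem_range] at hi
        rw [ih (i+1) (by omega), ih (m-i) (by omega)]
      rw [hs, ← aa_rec m] at hr
      exact mul_left_cancel₀ (by positivity : (2*((m:ℚ)+1)) ≠ 0) hr

lemma aa_one : aa 1 = 1 := by
  have h := aa_rec 0
  simp at h
  linarith

lemma aa_mem (n : ℕ) : (2:ℚ)^(n-1) * (n.factorial : ℚ) * aa n ∈ (⊥ : Subring ℚ) := by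
  induction n using Nat.strong_induction_on with
  | _ n ih =>
    match n with
    | 0 => simp only [aa_zero, mul_zero]; exact zero_mem _
    | 1 => rw [aa_one]; norm_num
    | (m+2) =>
      set m1 := m + 1 with hm1
      have hm1pos : 1 ≤ m1 := by omega
      have h2 : (2:ℚ)^(m1+1-1) * ((m1+1).factorial : ℚ) * aa (m1+1)
          = (2:ℚ)^(m1-1) * (m1.factorial : ℚ) * (2*((m1:ℚ)+1)*aa (m1+1)) := by
        rw [Nat.factorial_succ]
        rw [show (2:ℚ)^(m1+1-1) = 2*(2:ℚ)^(m1-1) from by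
          rw [show m1+1-1 = m1-1+1 from by omega, pow_succ']]
        push_cast
        ring
      rw [h2, aa_rec m1, if_neg (by omega : ¬ (m1 = 0))]
      rw [zero_sub, mul_add, Finset.mul_sum]
      apply add_mem
      · have he : (2:ℚ)^(m1-1) * (m1.factorial : ℚ) * (-(2*(m1:ℚ)*aa m1))
            = -(((2*m1 : ℕ) : ℚ) * ((2:ℚ)^(m1-1) * (m1.factorial : ℚ) * aa m1)) := by
          push_cast
          ring
        rw [he]
        exact neg_mem (mul_mem (natCast_mem _ _) (ih m1 (by omega)))
      · apply sum_mem
        intro i hi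
        rw [Finset.mem_range] at hi
        have hch : ((m1.choose i : ℚ)) * (i.factorial : ℚ) * ((m1-i).factorial : ℚ)
            = (m1.factorial : ℚ) := by
          exact_mod_cast Nat.choose_mul_factorial_mul_factorial (le_of_lt hi)
        have hp : (2:ℚ)^(m1-1) = 2^i * 2^((m1-i)-1) := by
          rw [← pow_add]; congr 1; omega
        have hf : (((i+1).factorial : ℕ) : ℚ) = ((i:ℚ)+1) * (i.factorial : ℚ) := by
          push_cast [Nat.factorial_succ]
          ring
        have he : (2:ℚ)^(m1-1) * (m1.factorial : ℚ) * (((i:ℚ)+1) * aa (i+1) * aa (m1-i))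
            = (m1.choose i : ℚ) * (((2:ℚ)^(i+1-1) * ((i+1).factorial : ℚ) * aa (i+1))
              * ((2:ℚ)^((m1-i)-1) * ((m1-i).factorial : ℚ) * aa (m1-i))) := by
          rw [show i+1-1 = i from rfl, hp, hf, ← hch]
          ring
        rw [he]
        exact mul_mem (natCast_mem _ _) (mul_mem (ih (i+1) (by omega)) (ih (m1-i) (by omega)))

lemma aa_int (n : ℕ) : ∃ m : ℤ, 2 ^ (n - 1) * (n.factorial : ℚ) * aa n = (m : ℚ) := by
  obtain ⟨m, hm⟩ := Subring.mem_bot.mp (aa_mem n)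
  exact ⟨m, hm.symm⟩

/-- There is a unique formal power series `A` over `ℚ` with zero constant coefficient
satisfying `exp(A) = 1 + 2X - A`; moreover for every `n ≥ 1`, `2^(n-1) * n! * (coeff n A)`
is an integer (the integers `1, -1, 1, 1, -13, 47, 73, -2447, 16811, ...` arising in the
computation of Airey's converging factor for asymptotic series). -/
theorem airey_exp_eigen_sequence :
    (∃! A : PowerSeries ℚ,
        PowerSeries.coeff 0 A = 0 ∧
        PowerSeries.substRat A (PowerSeries.exp ℚ) = 1 + 2 * PowerSeries.X - A) ∧
    ∀ A : PowerSeries ℚ,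
      PowerSeries.coeff 0 A = 0 →
      PowerSeries.substRat A (PowerSeries.exp ℚ) = 1 + 2 * PowerSeries.X - A →
      ∀ n : ℕ, 1 ≤ n →
        ∃ m : ℤ, 2 ^ (n - 1) * (n.factorial : ℚ) * PowerSeries.coeff n A = (m : ℚ) := by

  constructor
  · refine ⟨PowerSeries.mk aa, ⟨mkaa_zero, mkaa_sol⟩, ?_⟩
    intro B hB
    ext n
    rw [coeff_eq_aa B hB.1 hB.2 n, PowerSeries.coeff_mk]
  · intro A h0 heq n _
    rw [coeff_eq_aa A h0 heq n]
    exact aa_int n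
end
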